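/- arXiv:math/0303229 — 10 statements merged into one kernel-verified Lean document; each statement's English description precedes it below -/
import Mathlib

section
/- Let α : G → Aut(R) be an action of a group G on a ring R (with identity), and let R*_α G denote the associated skew group ring. If R*_α G is a simple ring, then R is G-simple. -/
/-- `S` is a skew group ring `R*_α G`: the ring hom `ι : R →+* S` and the monoid hom
`σ : G →* S` realize `R` and `G` inside `S`, every element of `S` is uniquely a finite
sum `∑_g ι(r_g) * σ(g)` (so `S` is a free left `R`-module with basis the image of `G`),
and multiplication is twisted by the action: `σ(g) * ι(r) = ι(α(g)(r)) * σ(g)`. -/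
structure IsSkewGroupRing (R : Type*) [Ring R] (G : Type*) [Group G]
    (α : G →* RingAut R) (S : Type*) [Ring S] (ι : R →+* S) (σ : G →* S) : Prop where
  repr_existsUnique : ∀ s : S, ∃! c : G →₀ R, s = c.sum fun g r => ι r * σ g
  commutes : ∀ (g : G) (r : R), σ g * ι r = ι (α g r) * σ g

/-- `R` is `G`-simple (with respect to the action `α : G →* RingAut R`): `R` is nonzero
and the only `G`-invariant two-sided ideals of `R` are `0` and `R`. -/
def IsGSimple (R : Type*) [Ring R] {G : Type*} [Group G] (α : G →* RingAut R) : Prop :=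
  Nontrivial R ∧
    ∀ I : TwoSidedIdeal R, (∀ (g : G), ∀ r ∈ I, α g r ∈ I) → I = ⊥ ∨ I = ⊤

/-- If the skew group ring `R*_α G` is a simple ring, then `R` is `G`-simple. -/
theorem isGSimple_of_isSimpleRing_skewGroupRing
    {R : Type*} [Ring R] {G : Type*} [Group G] (α : G →* RingAut R)
    {S : Type*} [Ring S] (ι : R →+* S) (σ : G →* S)
    (hS : IsSkewGroupRing R G α S ι σ)
    (hsimple : IsSimpleRing S) :
    IsGSimple R α := by
  classical
  haveI := hsimple
  have ntS : Nontrivial S := inferInstance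
  set f : G → R → S := fun g r => ι r * σ g with hf
  have hf0 : ∀ g : G, f g 0 = 0 := by intro g; simp [hf]
  -- R is nontrivial
  have ntR : Nontrivial R := by
    by_contra h
    rw [not_nontrivial_iff_subsingleton] at h
    refine (not_subsingleton S) ?_
    constructor
    intro a b
    obtain ⟨c, hc, -⟩ := hS.repr_existsUnique a
    obtain ⟨d, hd, -⟩ := hS.repr_existsUnique b
    rw [hc, hd]
    have : ∀ e : G →₀ R, e.sum f = 0 := by
      intro e
      apply Finset.sum_eq_zero
      intro g _
      have : e g = 0 := Subsingleton.elim _ _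
      rw [this, hf0 g]
    rw [this c, this d]
  -- injectivity of ι
  have hinj : Function.Injective ι := by
    intro x y hxy
    have hx : ι x = (Finsupp.single (1 : G) x).sum f := by
      rw [Finsupp.sum_single_index (hf0 1)]; simp [hf]
    have hy : ι y = (Finsupp.single (1 : G) y).sum f := by
      rw [Finsupp.sum_single_index (hf0 1)]; simp [hf]
    obtain ⟨c, -, hu⟩ := hS.repr_existsUnique (ι x)
    have h1 := hu _ hx
    have h2 := hu _ (hxy ▸ hy)
    have := h1.trans h2.symm
    simpa using congrArg (fun e : G →₀ R => e 1) this
  refine ⟨ntR, fun I hGI => ?_⟩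
  by_cases hIbot : I = ⊥
  · exact Or.inl hIbot
  right
  -- the set of elements of S with coefficients in I
  set Jset : Set S := {s | ∃ c : G →₀ R, (∀ g, c g ∈ I) ∧ s = c.sum f} with hJset
  have single_mem : ∀ (g : G) (r : R), r ∈ I → ι r * σ g ∈ Jset := by
    intro g r hr
    refine ⟨Finsupp.single g r, ?_, ?_⟩
    · intro h
      rcases eq_or_ne h g with rfl | hne
      · simpa using hr
      · simp [Finsupp.single_apply, Ne.symm hne]
    · rw [Finsupp.sum_single_index (hf0 g)]
  have zero_mem : (0 : S) ∈ Jset := ⟨0, fun g => by simp, by simp⟩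
  have add_mem : ∀ {x y : S}, x ∈ Jset → y ∈ Jset → x + y ∈ Jset := by
    rintro x y ⟨c, hc, rfl⟩ ⟨d, hd, rfl⟩
    refine ⟨c + d, fun g => by simpa using I.add_mem (hc g) (hd g), ?_⟩
    rw [Finsupp.sum_add_index' hf0 (fun g r r' => by simp [hf, add_mul])]
  have sum_mem : ∀ (t : Finset G) (F : G → S),
      (∀ a ∈ t, F a ∈ Jset) → ∑ a ∈ t, F a ∈ Jset := by
    intro t F hF
    exact Finset.sum_induction F (· ∈ Jset) (fun _ _ => add_mem) zero_mem hF
  have basis_mul : ∀ (r r' : R) (g g' : G), r' ∈ I →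
      (ι r * σ g) * (ι r' * σ g') ∈ Jset := by
    intro r r' g g' hr'
    have : (ι r * σ g) * (ι r' * σ g') = ι (r * α g r') * σ (g * g') := by
      rw [mul_assoc, ← mul_assoc (σ g), hS.commutes]
      simp [mul_assoc, map_mul]
    rw [this]
    exact single_mem _ _ (I.mul_mem_left _ _ (hGI g _ hr'))
  have mul_basis : ∀ (r r' : R) (g g' : G), r' ∈ I →
      (ι r' * σ g') * (ι r * σ g) ∈ Jset := by
    intro r r' g g' hr'
    have : (ι r' * σ g') * (ι r * σ g) = ι (r' * α g' r) * σ (g' * g) := by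
      rw [mul_assoc, ← mul_assoc (σ g'), hS.commutes]
      simp [mul_assoc, map_mul]
    rw [this]
    exact single_mem _ _ (I.mul_mem_right _ _ hr')
  have mul_left : ∀ {x y : S}, y ∈ Jset → x * y ∈ Jset := by
    rintro x y ⟨c, hc, rfl⟩
    obtain ⟨d, hd, -⟩ := hS.repr_existsUnique x
    rw [hd, Finsupp.sum, Finsupp.sum, Finset.sum_mul]
    apply sum_mem
    intro g _
    rw [Finset.mul_sum]
    apply sum_mem
    intro g' _
    exact basis_mul _ _ _ _ (hc g')
  have mul_right : ∀ {x y : S}, x ∈ Jset → x * y ∈ Jset := by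
    rintro x y ⟨c, hc, rfl⟩
    obtain ⟨d, hd, -⟩ := hS.repr_existsUnique y
    rw [hd, Finsupp.sum, Finsupp.sum, Finset.mul_sum]
    apply sum_mem
    intro g _
    rw [Finset.sum_mul]
    apply sum_mem
    intro g' _
    exact mul_basis _ _ _ _ (hc g')
  have neg_mem : ∀ {x : S}, x ∈ Jset → -x ∈ Jset := by
    intro x hx
    rw [← neg_one_mul]; exact mul_left hx
  set J : TwoSidedIdeal S :=
    TwoSidedIdeal.mk' Jset zero_mem add_mem neg_mem mul_left mul_right with hJ
  -- J ≠ ⊥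
  obtain ⟨x, hxI, hx0⟩ : ∃ x ∈ I, x ≠ 0 := by
    by_contra h
    push_neg at h
    exact hIbot (by ext y; simp [TwoSidedIdeal.mem_bot]; exact ⟨fun hy => h y hy, fun hy => hy ▸ I.zero_mem⟩)
  have hJne : J ≠ ⊥ := by
    intro hb
    have : ι x ∈ J := by
      rw [hJ, TwoSidedIdeal.mem_mk']
      simpa using single_mem 1 x hxI
    rw [hb, TwoSidedIdeal.mem_bot] at this
    exact hx0 (hinj (by simpa using this))
  have hJtop : J = ⊤ := (hsimple.1.eq_bot_or_eq_top J).resolve_left hJne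
  have hone : (1 : S) ∈ Jset := by
    have : (1 : S) ∈ J := hJtop ▸ TwoSidedIdeal.mem_top _
    rwa [hJ, TwoSidedIdeal.mem_mk'] at this
  obtain ⟨c, hc, hc1⟩ := hone
  obtain ⟨e, -, hu⟩ := hS.repr_existsUnique (1 : S)
  have h1 : (1 : S) = (Finsupp.single (1 : G) (1 : R)).sum f := by
    rw [Finsupp.sum_single_index (hf0 1)]; simp [hf]
  have hceq : c = Finsupp.single (1 : G) (1 : R) := (hu c hc1).trans (hu _ h1).symm
  have : (1 : R) ∈ I := by
    have := hc 1
    rwa [hceq, Finsupp.single_eq_same] at this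
  ext y
  simp only [TwoSidedIdeal.mem_top, iff_true]
  simpa using I.mul_mem_left y 1 this
end

section
/- Let α : G → Aut(R) be an action of a group G on a ring R. If R is G-simple, then no proper two-sided ideal of the skew group ring R*_α G intersects R nontrivially; that is, any two-sided ideal I of R*_α G with I ∩ R ≠ 0 equals R*_α G. -/
/-- If `R` is `G`-simple, then no proper two-sided ideal of the skew group ring `R*_α G`
intersects `R` nontrivially: any two-sided ideal of `R*_α G` containing a nonzero element
of `R` is the whole ring. -/
theorem skewGroupRing_twoSidedIdeal_eq_top_of_inter_ne_bot
    {R : Type*} [Ring R] {G : Type*} [Group G] (α : G →* RingAut R)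
    {S : Type*} [Ring S] (ι : R →+* S) (σ : G →* S)
    (hS : IsSkewGroupRing R G α S ι σ)
    (hGsimple : IsGSimple R α)
    (I : TwoSidedIdeal S) (r : R) (hr : r ≠ 0) (hrI : ι r ∈ I) :
    I = ⊤ := by
  set J : TwoSidedIdeal R := I.comap ι with hJ
  have hJinv : ∀ (g : G), ∀ x ∈ J, α g x ∈ J := by
    intro g x hx
    rw [hJ, TwoSidedIdeal.mem_comap ι] at hx ⊢
    have h1 : σ g * ι x * σ g⁻¹ ∈ I := I.mul_mem_right _ _ (I.mul_mem_left _ _ hx)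
    have h2 : ι (α g x) * (σ g * σ g⁻¹) = σ g * ι x * σ g⁻¹ := by
      rw [← mul_assoc, ← hS.commutes]
    rw [← map_mul, mul_inv_cancel, map_one, mul_one] at h2
    rwa [h2]
  rcases hGsimple.2 J hJinv with h | h
  · exact absurd (h ▸ ((TwoSidedIdeal.mem_comap ι).2 hrI) : r ∈ (⊥ : TwoSidedIdeal R)) hr
  · have : (1 : R) ∈ J := h ▸ TwoSidedIdeal.mem_top R
    rw [hJ, TwoSidedIdeal.mem_comap ι, map_one] at this
    exact TwoSidedIdeal.eq_top I this
end

section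
/- Let G be an abelian group with an outer action α on a ring R. Then the skew group ring R*_α G is a simple ring if and only if R is G-simple. -/
/-- The action `α` is outer if the identity is the only element of `G` mapping to an
inner automorphism of `R` (i.e. one of the form `r ↦ u⁻¹ * r * u` for a unit `u`). -/
def IsOuterAction {R : Type*} [Ring R] {G : Type*} [Group G] (α : G →* RingAut R) : Prop :=
  ∀ g : G, (∃ u : Rˣ, ∀ r : R, α g r = ↑u⁻¹ * r * ↑u) → g = 1

/-! `⇒`: a `G`-invariant ideal `I` of `R` extends to the ideal of `S` of elements with all
coefficients in `I`, which is proper and nonzero when `I` is.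

`⇐`: in a nonzero ideal `J` of `S` pick `y ≠ 0` of minimal support, shifted so that its
coefficient at `1` is nonzero. The coefficients at `1` of elements of `J` supported in `supp y`
form a `G`-invariant ideal (conjugation by `σ g` acts coefficientwise because `G` is abelian), so we
may assume that coefficient is `1`. By minimality, any element of `J` supported in `supp y` is a
left `R`-multiple of `y`; applied to `y * ι r` and `σ g * y * σ g⁻¹` this shows that every other
coefficient `u` of `y` satisfies `r * u = u * α h r` and is `G`-fixed. Then `R * u` is a nonzero
`G`-invariant ideal, so `u` is a unit making `α h` inner, which outerness forbids. Hence `y = 1`. -/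

namespace IsGSimple

variable {R : Type*} [Ring R] {G : Type*} [Group G] {α : G →* RingAut R}

lemma one_mem_of_ne_zero_mem (hR : IsGSimple R α) {I : TwoSidedIdeal R}
    (hI : ∀ g, ∀ r ∈ I, α g r ∈ I) {a : R} (ha : a ≠ 0) (haI : a ∈ I) : (1 : R) ∈ I :=
  I.one_mem_iff.mpr <| (hR.2 I hI).resolve_left fun h =>
    ha ((TwoSidedIdeal.mem_bot _).mp (h ▸ haI))

lemma exists_units_apply_eq_inv_mul_mul (hR : IsGSimple R α) {u : R} (hu : u ≠ 0)
    (hfix : ∀ g, α g u = u) (θ : R ≃+* R) (hθ : ∀ r, r * u = u * θ r) :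
    ∃ U : Rˣ, ∀ r, θ r = ↑U⁻¹ * r * ↑U := by
  have hθ' : ∀ t, u * t = θ.symm t * u := fun t => by rw [hθ, θ.apply_symm_apply]
  let I : TwoSidedIdeal R := .mk' {b | ∃ r, r * u = b}
    ⟨0, zero_mul u⟩
    (fun ⟨r, hr⟩ ⟨r', hr'⟩ => ⟨r + r', by rw [add_mul, hr, hr']⟩)
    (fun ⟨r, hr⟩ => ⟨-r, by rw [neg_mul, hr]⟩)
    (fun {t _} ⟨r, hr⟩ => ⟨t * r, by rw [mul_assoc, hr]⟩)
    (fun {_ t} ⟨r, hr⟩ => ⟨r * θ.symm t, by rw [← hr, mul_assoc, mul_assoc, hθ']⟩)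
  have hmem : ∀ b, b ∈ I ↔ ∃ r, r * u = b := fun b => TwoSidedIdeal.mem_mk' ..
  have hI : ∀ g, ∀ b ∈ I, α g b ∈ I := fun g b hb => by
    obtain ⟨r, rfl⟩ := (hmem b).mp hb
    exact (hmem _).mpr ⟨α g r, by rw [map_mul, hfix]⟩
  obtain ⟨v, hvu⟩ : ∃ v, v * u = 1 :=
    (hmem 1).mp (hR.one_mem_of_ne_zero_mem hI hu ((hmem u).mpr ⟨1, one_mul u⟩))
  have hθv : ∀ r, θ r = v * r * u := fun r => by rw [mul_assoc, hθ, ← mul_assoc, hvu, one_mul]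
  -- `θ (u * v) = (v * u) * (v * u) = 1` forces `u * v = 1`.
  have huv : u * v = 1 := θ.injective (by
    rw [hθv, map_one, ← mul_assoc, hvu, one_mul, hvu])
  exact ⟨⟨u, v, huv, hvu⟩, hθv⟩

end IsGSimple

namespace IsSkewGroupRing

open Finset

section Group

variable {R : Type*} [Ring R] {G : Type*} [Group G] {α : G →* RingAut R}
  {S : Type*} [Ring S] {ι : R →+* S} {σ : G →* S}
  (hS : IsSkewGroupRing R G α S ι σ)

noncomputable def coeff : S ≃+ (G →₀ R) :=
  (AddEquiv.ofBijective
    (Finsupp.liftAddHom fun g => (AddMonoidHom.mulRight (σ g)).comp ι.toAddMonoidHom)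
    ((Function.bijective_iff_existsUnique _).mpr fun s => by
      simpa [Finsupp.liftAddHom_apply, Function.comp_def, eq_comm]
        using hS.repr_existsUnique s)).symm

lemma sum_coeff (s : S) : ((hS.coeff s).sum fun g r => ι r * σ g) = s :=
  hS.coeff.symm_apply_apply s

lemma coeff_finsuppSum (c : G →₀ R) : hS.coeff (c.sum fun g r => ι r * σ g) = c :=
  hS.coeff.apply_symm_apply c

lemma coeff_iota_mul_sigma (r : R) (g : G) : hS.coeff (ι r * σ g) = Finsupp.single g r := by
  simpa using hS.coeff_finsuppSum (Finsupp.single g r)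

lemma coeff_iota (r : R) : hS.coeff (ι r) = Finsupp.single 1 r := by
  simpa using hS.coeff_iota_mul_sigma r 1

lemma coeff_one : hS.coeff 1 = Finsupp.single 1 1 := by
  simpa using hS.coeff_iota 1

lemma coeff_finsuppSum_apply {φ : G → R → R} (hφ : ∀ g, φ g 0 = 0) {τ : G → G}
    (hτ : τ.Injective) (c : G →₀ R) (g : G) :
    hS.coeff (c.sum fun h r => ι (φ h r) * σ (τ h)) (τ g) = φ g (c g) := by
  simp only [map_finsuppSum, coeff_iota_mul_sigma, Finsupp.sum_apply]
  rw [Finsupp.sum_eq_single g, Finsupp.single_eq_same]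
  · exact fun h _ hne => Finsupp.single_eq_of_ne (hτ.ne hne).symm
  · intro _; rw [hφ, Finsupp.single_zero, Finsupp.zero_apply]

lemma coeff_iota_mul (r : R) (s : S) (g : G) : hS.coeff (ι r * s) g = r * hS.coeff s g := by
  have hs : ι r * s = (hS.coeff s).sum fun h a => ι (r * a) * σ h := by
    conv_lhs => rw [← hS.sum_coeff s]
    simp only [Finsupp.mul_sum, map_mul, mul_assoc]
  rw [hs]
  exact hS.coeff_finsuppSum_apply (τ := id) (fun _ => mul_zero r) Function.injective_id _ g

lemma coeff_mul_iota (s : S) (r : R) (g : G) :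
    hS.coeff (s * ι r) g = hS.coeff s g * α g r := by
  have hs : s * ι r = (hS.coeff s).sum fun h a => ι (a * α h r) * σ h := by
    conv_lhs => rw [← hS.sum_coeff s]
    simp only [Finsupp.sum_mul, map_mul, mul_assoc, hS.commutes]
  rw [hs]
  exact hS.coeff_finsuppSum_apply (φ := fun h a => a * α h r) (τ := id) (fun _ => zero_mul _)
    Function.injective_id _ g

lemma coeff_mul_sigma_mul (s : S) (k g : G) : hS.coeff (s * σ k) (g * k) = hS.coeff s g := by
  have hs : s * σ k = (hS.coeff s).sum fun h a => ι a * σ (h * k) := by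
    conv_lhs => rw [← hS.sum_coeff s]
    simp only [Finsupp.sum_mul, map_mul, mul_assoc]
  rw [hs]
  exact hS.coeff_finsuppSum_apply (φ := fun _ a => a) (fun _ => rfl) (mul_left_injective k) _ g

lemma coeff_mul_sigma (s : S) (k g : G) : hS.coeff (s * σ k) g = hS.coeff s (g * k⁻¹) := by
  simpa using hS.coeff_mul_sigma_mul s k (g * k⁻¹)

lemma coeff_sigma_mul_mul (k : G) (s : S) (g : G) :
    hS.coeff (σ k * s) (k * g) = α k (hS.coeff s g) := by
  have hs : σ k * s = (hS.coeff s).sum fun h a => ι (α k a) * σ (k * h) := by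
    conv_lhs => rw [← hS.sum_coeff s]
    simp only [Finsupp.mul_sum, map_mul, ← mul_assoc, hS.commutes]
  rw [hs]
  exact hS.coeff_finsuppSum_apply (fun _ => map_zero _) (mul_right_injective k) _ g

lemma coeff_sigma_mul (k : G) (s : S) (g : G) :
    hS.coeff (σ k * s) g = α k (hS.coeff s (k⁻¹ * g)) := by
  simpa using hS.coeff_sigma_mul_mul k s (k⁻¹ * g)

include hS in
@[elab_as_elim]
lemma induction_on {p : S → Prop} (s : S) (zero : p 0) (add : ∀ a b, p a → p b → p (a + b))
    (monomial : ∀ r g, p (ι r * σ g)) : p s := by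
  rw [← hS.sum_coeff s]
  exact Finset.sum_induction _ p add zero fun g _ => monomial _ _

include hS in
lemma nontrivial_iff : Nontrivial S ↔ Nontrivial R := by
  refine ⟨fun _ => ?_, fun _ => nontrivial_of_ne 1 0 fun h => ?_⟩
  · by_contra h
    rw [not_nontrivial_iff_subsingleton] at h
    exact not_subsingleton S hS.coeff.injective.subsingleton
  · have := hS.coeff_one
    rw [h, map_zero, eq_comm, Finsupp.single_eq_zero] at this
    exact one_ne_zero this

def extendIdeal (I : TwoSidedIdeal R) (hI : ∀ g, ∀ r ∈ I, α g r ∈ I) : TwoSidedIdeal S :=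
  .mk' {s | ∀ g, hS.coeff s g ∈ I}
    (fun g => by simp)
    (fun hs ht g => by simpa using I.add_mem (hs g) (ht g))
    (fun hs g => by simpa using I.neg_mem (hs g))
    (fun {x y} hy => by
      induction x using hS.induction_on with
      | zero => simp
      | add a b ha hb => simpa [add_mul] using fun g => I.add_mem (ha g) (hb g)
      | monomial r k =>
        intro g
        rw [mul_assoc, coeff_iota_mul, coeff_sigma_mul]
        exact I.mul_mem_left _ _ (hI k _ (hy _)))
    (fun {x y} hx => by
      induction y using hS.induction_on with
      | zero => simp
      | add a b ha hb => simpa [mul_add] using fun g => I.add_mem (ha g) (hb g)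
      | monomial r k =>
        intro g
        rw [← mul_assoc, ← inv_mul_cancel_right g k, coeff_mul_sigma_mul, coeff_mul_iota]
        exact I.mul_mem_right _ _ (hx _))

variable {hS} in
lemma mem_extendIdeal {I : TwoSidedIdeal R} {hI : ∀ g, ∀ r ∈ I, α g r ∈ I} {s : S} :
    s ∈ hS.extendIdeal I hI ↔ ∀ g, hS.coeff s g ∈ I :=
  TwoSidedIdeal.mem_mk' ..

lemma eq_bot_of_extendIdeal_eq_bot {I : TwoSidedIdeal R} {hI : ∀ g, ∀ r ∈ I, α g r ∈ I}
    (h : hS.extendIdeal I hI = ⊥) : I = ⊥ := by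
  refine eq_bot_iff.mpr fun r hr => ?_
  have hιr : ι r ∈ hS.extendIdeal I hI := mem_extendIdeal.mpr fun g => by
    rw [hS.coeff_iota]
    rcases (Finsupp.single_apply_mem g : Finsupp.single 1 r g ∈ ({0, r} : Set R)) with h | h <;>
      rw [h]
    exacts [I.zero_mem, hr]
  rw [h, TwoSidedIdeal.mem_bot, ← hS.coeff.map_eq_zero_iff, hS.coeff_iota,
    Finsupp.single_eq_zero] at hιr
  exact (TwoSidedIdeal.mem_bot _).mpr hιr

lemma eq_top_of_extendIdeal_eq_top {I : TwoSidedIdeal R} {hI : ∀ g, ∀ r ∈ I, α g r ∈ I}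
    (h : hS.extendIdeal I hI = ⊤) : I = ⊤ := by
  have h1 : (1 : S) ∈ hS.extendIdeal I hI := h ▸ TwoSidedIdeal.mem_top _
  have := mem_extendIdeal.mp h1 1
  rw [hS.coeff_one, Finsupp.single_eq_same] at this
  exact I.eq_top this

include hS in
lemma isGSimple [IsSimpleRing S] : IsGSimple R α :=
  ⟨hS.nontrivial_iff.mp inferInstance, fun I hI => (eq_bot_or_eq_top (hS.extendIdeal I hI)).imp
    hS.eq_bot_of_extendIdeal_eq_bot hS.eq_top_of_extendIdeal_eq_top⟩

lemma card_support_coeff_mul_sigma (s : S) (k : G) :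
    #(hS.coeff (s * σ k)).support = #(hS.coeff s).support :=
  card_nbij' (· * k⁻¹) (· * k) (fun g => by simp [coeff_mul_sigma])
    (fun g => by simp [coeff_mul_sigma]) (fun g _ => by simp) (fun g _ => by simp)

lemma exists_minimal {J : TwoSidedIdeal S} (hJ : J ≠ ⊥) :
    ∃ y ∈ J, hS.coeff y 1 ≠ 0 ∧
      ∀ z ∈ J, z ≠ 0 → #(hS.coeff y).support ≤ #(hS.coeff z).support := by
  obtain ⟨x, hxJ, hx0⟩ := SetLike.exists_of_lt (bot_lt_iff_ne_bot.mpr hJ)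
  obtain ⟨y, ⟨hyJ, hy0⟩, hmin⟩ := (measure fun z => #(hS.coeff z).support).wf.has_min
    {z | z ∈ J ∧ z ≠ 0} ⟨x, hxJ, fun h => hx0 ((TwoSidedIdeal.mem_bot _).mpr h)⟩
  obtain ⟨g, hg⟩ := Finsupp.support_nonempty_iff.mpr (hS.coeff.map_ne_zero_iff.mpr hy0)
  refine ⟨y * σ g⁻¹, J.mul_mem_right _ _ hyJ, ?_, fun z hzJ hz0 => ?_⟩
  · rwa [coeff_mul_sigma, inv_inv, one_mul, ← Finsupp.mem_support_iff]
  · rw [card_support_coeff_mul_sigma]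
    exact not_lt.mp (hmin z ⟨hzJ, hz0⟩)

lemma eq_iota_coeff_one_mul_of_minimal [Nontrivial R] {J : TwoSidedIdeal S} {y : S} (hyJ : y ∈ J)
    (hy1 : hS.coeff y 1 = 1)
    (hmin : ∀ z ∈ J, z ≠ 0 → #(hS.coeff y).support ≤ #(hS.coeff z).support)
    {z : S} (hzJ : z ∈ J) (hzy : ∀ g, hS.coeff y g = 0 → hS.coeff z g = 0) :
    z = ι (hS.coeff z 1) * y := by
  classical
  set w := z - ι (hS.coeff z 1) * y
  have hwJ : w ∈ J := J.sub_mem hzJ (J.mul_mem_left _ _ hyJ)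
  have hw : (hS.coeff w).support ⊂ (hS.coeff y).support := by
    refine LE.le.trans_ssubset (fun g hg => ?_)
      (erase_ssubset (Finsupp.mem_support_iff.mpr (hy1 ▸ one_ne_zero)))
    have hwg : hS.coeff w g = hS.coeff z g - hS.coeff z 1 * hS.coeff y g := by
      rw [map_sub, Finsupp.sub_apply, coeff_iota_mul]
    rw [Finsupp.mem_support_iff, hwg] at hg
    refine mem_erase.mpr ⟨?_, Finsupp.mem_support_iff.mpr ?_⟩
    · rintro rfl
      exact hg (by rw [hy1, mul_one, sub_self])
    · intro hy
      exact hg (by rw [hy, hzy g hy, mul_zero, sub_self])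
  by_contra hne
  exact (card_lt_card hw).not_ge (hmin w hwJ (sub_ne_zero.mpr hne))

def coeffIdeal (J : TwoSidedIdeal S) (y : S) : TwoSidedIdeal R :=
  .mk' {a | ∃ z ∈ J, (∀ g, hS.coeff y g = 0 → hS.coeff z g = 0) ∧ hS.coeff z 1 = a}
    ⟨0, J.zero_mem, fun _ _ => by simp, by simp⟩
    (fun ⟨z, hz, hzy, hza⟩ ⟨z', hz', hz'y, hz'b⟩ => ⟨z + z', J.add_mem hz hz',
      fun g hg => by simp [hzy g hg, hz'y g hg], by simp [hza, hz'b]⟩)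
    (fun ⟨z, hz, hzy, hza⟩ => ⟨-z, J.neg_mem hz, fun g hg => by simp [hzy g hg], by simp [hza]⟩)
    (fun {r _} ⟨z, hz, hzy, hza⟩ => ⟨ι r * z, J.mul_mem_left _ _ hz,
      fun g hg => by rw [coeff_iota_mul, hzy g hg, mul_zero], by rw [coeff_iota_mul, hza]⟩)
    (fun {_ r} ⟨z, hz, hzy, hza⟩ => ⟨z * ι r, J.mul_mem_right _ _ hz,
      fun g hg => by rw [coeff_mul_iota, hzy g hg, zero_mul],
      by rw [coeff_mul_iota, hza, map_one, RingAut.one_apply]⟩)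

variable {hS} in
lemma mem_coeffIdeal {J : TwoSidedIdeal S} {y : S} {a : R} :
    a ∈ hS.coeffIdeal J y ↔
      ∃ z ∈ J, (∀ g, hS.coeff y g = 0 → hS.coeff z g = 0) ∧ hS.coeff z 1 = a :=
  TwoSidedIdeal.mem_mk' ..

end Group

section CommGroup

variable {R : Type*} [Ring R] {G : Type*} [CommGroup G] {α : G →* RingAut R}
  {S : Type*} [Ring S] {ι : R →+* S} {σ : G →* S}
  (hS : IsSkewGroupRing R G α S ι σ)

lemma coeff_sigma_mul_mul_sigma_inv (k : G) (s : S) (g : G) :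
    hS.coeff (σ k * s * σ k⁻¹) g = α k (hS.coeff s g) := by
  rw [coeff_mul_sigma, inv_inv, coeff_sigma_mul, mul_comm g k, inv_mul_cancel_left]

lemma coeffIdeal_invariant (J : TwoSidedIdeal S) (y : S) :
    ∀ k, ∀ a ∈ hS.coeffIdeal J y, α k a ∈ hS.coeffIdeal J y := by
  intro k a ha
  obtain ⟨z, hzJ, hzy, rfl⟩ := mem_coeffIdeal.mp ha
  refine mem_coeffIdeal.mpr ⟨σ k * z * σ k⁻¹, J.mul_mem_right _ _ (J.mul_mem_left _ _ hzJ),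
    fun g hg => ?_, coeff_sigma_mul_mul_sigma_inv ..⟩
  rw [coeff_sigma_mul_mul_sigma_inv, hzy g hg, map_zero]

lemma exists_coeff_one_eq_one (hR : IsGSimple R α) {J : TwoSidedIdeal S} {y : S} (hyJ : y ∈ J)
    (hy1 : hS.coeff y 1 ≠ 0) :
    ∃ z ∈ J, (∀ g, hS.coeff y g = 0 → hS.coeff z g = 0) ∧ hS.coeff z 1 = 1 :=
  mem_coeffIdeal.mp <| hR.one_mem_of_ne_zero_mem (hS.coeffIdeal_invariant J y) hy1
    (mem_coeffIdeal.mpr ⟨y, hyJ, fun _ => id, rfl⟩)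

lemma coeff_eq_zero_of_minimal (houter : IsOuterAction α) (hR : IsGSimple R α)
    {J : TwoSidedIdeal S} {y : S} (hyJ : y ∈ J) (hy1 : hS.coeff y 1 = 1)
    (hmin : ∀ z ∈ J, z ≠ 0 → #(hS.coeff y).support ≤ #(hS.coeff z).support)
    {h : G} (hh : h ≠ 1) : hS.coeff y h = 0 := by
  have := hR.1
  by_contra hu
  have hnormal : ∀ r, r * hS.coeff y h = hS.coeff y h * α h r := fun r => by
    have hyr := hS.eq_iota_coeff_one_mul_of_minimal hyJ hy1 hmin (J.mul_mem_right _ (ι r) hyJ)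
      fun g hg => by rw [coeff_mul_iota, hg, zero_mul]
    rw [coeff_mul_iota, hy1, one_mul, map_one, RingAut.one_apply] at hyr
    rw [← coeff_iota_mul, ← hyr, coeff_mul_iota]
  have hfix : ∀ k, α k (hS.coeff y h) = hS.coeff y h := fun k => by
    have hyk := hS.eq_iota_coeff_one_mul_of_minimal hyJ hy1 hmin
      (J.mul_mem_right _ (σ k⁻¹) (J.mul_mem_left (σ k) _ hyJ))
      fun g hg => by rw [coeff_sigma_mul_mul_sigma_inv, hg, map_zero]
    rw [coeff_sigma_mul_mul_sigma_inv, hy1, map_one, map_one, one_mul] at hyk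
    rw [← coeff_sigma_mul_mul_sigma_inv, hyk]
  obtain ⟨U, hU⟩ := hR.exists_units_apply_eq_inv_mul_mul hu hfix (α h) hnormal
  exact hh (houter h ⟨U, hU⟩)

include hS in
lemma one_mem_of_ne_bot (houter : IsOuterAction α) (hR : IsGSimple R α)
    {J : TwoSidedIdeal S} (hJ : J ≠ ⊥) : (1 : S) ∈ J := by
  obtain ⟨y, hyJ, hy1, hmin⟩ := hS.exists_minimal hJ
  obtain ⟨z, hzJ, hzy, hz1⟩ := hS.exists_coeff_one_eq_one hR hyJ hy1
  have hzmin : ∀ w ∈ J, w ≠ 0 → #(hS.coeff z).support ≤ #(hS.coeff w).support :=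
    fun w hwJ hw0 => (card_le_card fun g hg => Finsupp.mem_support_iff.mpr fun hyg =>
      Finsupp.mem_support_iff.mp hg (hzy g hyg)).trans (hmin w hwJ hw0)
  have hz : hS.coeff z = hS.coeff 1 := by
    rw [hS.coeff_one]
    refine Finsupp.eq_single_iff.mpr ⟨fun g hg => mem_singleton.mpr ?_, hz1⟩
    by_contra hg1
    exact Finsupp.mem_support_iff.mp hg (hS.coeff_eq_zero_of_minimal houter hR hzJ hz1 hzmin hg1)
  rwa [hS.coeff.injective hz] at hzJ

include hS in
lemma isSimpleRing (houter : IsOuterAction α) (hR : IsGSimple R α) : IsSimpleRing S :=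
  haveI := hS.nontrivial_iff.mpr hR.1
  .of_eq_bot_or_eq_top fun J =>
    or_iff_not_imp_left.mpr fun hJ => J.eq_top (hS.one_mem_of_ne_bot houter hR hJ)

end CommGroup

end IsSkewGroupRing

/-- If `G` is an abelian group with outer action `α` on `R`, then the skew group ring
`R*_α G` is simple if and only if `R` is `G`-simple. -/
theorem skewGroupRing_isSimpleRing_iff_isGSimple_of_abelian_outer
    {R : Type*} [Ring R] {G : Type*} [CommGroup G] (α : G →* RingAut R)
    (houter : IsOuterAction α)
    {S : Type*} [Ring S] (ι : R →+* S) (σ : G →* S)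
    (hS : IsSkewGroupRing R G α S ι σ) :
    IsSimpleRing S ↔ IsGSimple R α :=
  ⟨fun _ => hS.isGSimple, hS.isSimpleRing houter⟩
end

section
/- Let R be a commutative integral domain and let α : G → Aut(R) be a faithful action of a group G on R. Then R is G-simple if and only if the skew group ring R*_α G is a simple ring. -/
section Aux

variable {R : Type*} [Ring R] {G : Type*} [Group G] {α : G →* RingAut R}
  {S : Type*} [Ring S] {ι : R →+* S} {σ : G →* S}

noncomputable def skewCoeff (hS : IsSkewGroupRing R G α S ι σ) (s : S) : G →₀ R :=
  (hS.repr_existsUnique s).choose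

lemma skewCoeff_repr (hS : IsSkewGroupRing R G α S ι σ) (s : S) :
    s = (skewCoeff hS s).sum fun g r => ι r * σ g :=
  (hS.repr_existsUnique s).choose_spec.1

lemma skewCoeff_unique (hS : IsSkewGroupRing R G α S ι σ) {s : S} {d : G →₀ R}
    (h : s = d.sum fun g r => ι r * σ g) : skewCoeff hS s = d :=
  ((hS.repr_existsUnique s).choose_spec.2 d h).symm

lemma skewCoeff_zero (hS : IsSkewGroupRing R G α S ι σ) : skewCoeff hS (0 : S) = 0 :=
  skewCoeff_unique hS (by simp)

lemma skewCoeff_add (hS : IsSkewGroupRing R G α S ι σ) (s t : S) :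
    skewCoeff hS (s + t) = skewCoeff hS s + skewCoeff hS t :=
  skewCoeff_unique hS (by
    rw [Finsupp.sum_add_index' (fun g => by simp) (fun g r1 r2 => by rw [map_add, add_mul])]
    exact congrArg₂ (· + ·) (skewCoeff_repr hS s) (skewCoeff_repr hS t))

noncomputable def skewCoeffHom (hS : IsSkewGroupRing R G α S ι σ) : S →+ (G →₀ R) where
  toFun := skewCoeff hS
  map_zero' := skewCoeff_zero hS
  map_add' := skewCoeff_add hS

lemma skewCoeff_eq_zero (hS : IsSkewGroupRing R G α S ι σ) {s : S}
    (h : skewCoeff hS s = 0) : s = 0 := by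
  rw [skewCoeff_repr hS s, h, Finsupp.sum_zero_index]

lemma skewCoeff_basic (hS : IsSkewGroupRing R G α S ι σ) (r : R) (g : G) :
    skewCoeff hS (ι r * σ g) = Finsupp.single g r :=
  skewCoeff_unique hS (by rw [Finsupp.sum_single_index (by simp)])

lemma skewCoeff_iota (hS : IsSkewGroupRing R G α S ι σ) (r : R) :
    skewCoeff hS (ι r) = Finsupp.single 1 r := by
  have := skewCoeff_basic hS r 1
  simpa using this

lemma iota_injective (hS : IsSkewGroupRing R G α S ι σ) : Function.Injective ι := by
  intro a b hab
  have : Finsupp.single (1 : G) a = Finsupp.single 1 b := by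
    rw [← skewCoeff_iota hS a, ← skewCoeff_iota hS b, hab]
  exact Finsupp.single_injective 1 this

lemma skew_mul_basic (hS : IsSkewGroupRing R G α S ι σ) (a b : R) (g h : G) :
    (ι a * σ g) * (ι b * σ h) = ι (a * α g b) * σ (g * h) := by
  rw [mul_assoc (ι a), ← mul_assoc (σ g), hS.commutes, mul_assoc (ι (α g b)),
    ← map_mul σ, ← mul_assoc, ← map_mul ι]

lemma skewCoeff_mul (hS : IsSkewGroupRing R G α S ι σ) (s t : S) :
    skewCoeff hS (s * t) = (skewCoeff hS s).sum fun g a =>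
      (skewCoeff hS t).sum fun h b => Finsupp.single (g * h) (a * α g b) := by
  have hst : s * t = (skewCoeff hS s).sum fun g a =>
      (skewCoeff hS t).sum fun h b => ι (a * α g b) * σ (g * h) := by
    conv_lhs => rw [skewCoeff_repr hS s, skewCoeff_repr hS t]
    rw [Finsupp.sum_mul]
    refine Finsupp.sum_congr fun g hg => ?_
    rw [Finsupp.mul_sum]
    exact Finsupp.sum_congr fun h hh => skew_mul_basic hS _ _ _ _
  show skewCoeffHom hS (s * t) = _
  rw [hst, map_finsuppSum]
  refine Finsupp.sum_congr fun g hg => ?_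
  rw [map_finsuppSum]
  exact Finsupp.sum_congr fun h hh => skewCoeff_basic hS _ _

omit [Group G] in
/-- evaluation helper -/
lemma sum_single_apply {M : Type*} [AddCommMonoid M] (f : G →₀ M) (F : G → M → M)
    (hF : ∀ g, F g 0 = 0) (k : G) :
    (f.sum fun x c => Finsupp.single x (F x c)) k = F k (f k) := by
  classical
  rw [Finsupp.sum_apply]
  simp only [Finsupp.single_apply, Finsupp.sum, Finset.sum_ite_eq']
  split_ifs with h
  · rfl
  · rw [Finsupp.notMem_support_iff.1 h, hF]

lemma skewCoeff_mul_sigma (hS : IsSkewGroupRing R G α S ι σ) (s : S) (g : G) :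
    skewCoeff hS (s * σ g) = Finsupp.mapDomain (· * g) (skewCoeff hS s) := by
  have hst : s * σ g = (skewCoeff hS s).sum fun h r => ι r * σ (h * g) := by
    conv_lhs => rw [skewCoeff_repr hS s]
    rw [Finsupp.sum_mul]
    exact Finsupp.sum_congr fun h hh => by rw [mul_assoc, ← map_mul σ]
  show skewCoeffHom hS (s * σ g) = _
  rw [hst, map_finsuppSum, Finsupp.mapDomain]
  exact Finsupp.sum_congr fun h hh => skewCoeff_basic hS _ _

lemma skewCoeff_mul_iota (hS : IsSkewGroupRing R G α S ι σ) (s : S) (a : R) (k : G) :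
    skewCoeff hS (s * ι a) k = skewCoeff hS s k * α k a := by
  have hst : s * ι a = (skewCoeff hS s).sum fun g r => ι (r * α g a) * σ g := by
    conv_lhs => rw [skewCoeff_repr hS s]
    rw [Finsupp.sum_mul]
    refine Finsupp.sum_congr fun g hg => ?_
    rw [mul_assoc, hS.commutes, ← mul_assoc, ← map_mul ι]
  have h1 : skewCoeff hS (s * ι a)
      = (skewCoeff hS s).sum fun g r => Finsupp.single g (r * α g a) := by
    show skewCoeffHom hS (s * ι a) = _
    rw [hst, map_finsuppSum]
    exact Finsupp.sum_congr fun g hg => skewCoeff_basic hS _ _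
  rw [h1, sum_single_apply (skewCoeff hS s) (fun g r => r * α g a) (fun g => zero_mul _)]

lemma skewCoeff_iota_mul (hS : IsSkewGroupRing R G α S ι σ) (s : S) (a : R) (k : G) :
    skewCoeff hS (ι a * s) k = a * skewCoeff hS s k := by
  have hst : ι a * s = (skewCoeff hS s).sum fun g r => ι (a * r) * σ g := by
    conv_lhs => rw [skewCoeff_repr hS s]
    rw [Finsupp.mul_sum]
    refine Finsupp.sum_congr fun g hg => ?_
    rw [← mul_assoc, ← map_mul ι]
  have h1 : skewCoeff hS (ι a * s)
      = (skewCoeff hS s).sum fun g r => Finsupp.single g (a * r) := by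
    show skewCoeffHom hS (ι a * s) = _
    rw [hst, map_finsuppSum]
    exact Finsupp.sum_congr fun g hg => skewCoeff_basic hS _ _
  rw [h1, sum_single_apply (skewCoeff hS s) (fun g r => a * r) (fun g => mul_zero _)]

lemma sigma_conj (hS : IsSkewGroupRing R G α S ι σ) (g : G) (r : R) :
    σ g * ι r * σ g⁻¹ = ι (α g r) := by
  rw [hS.commutes, mul_assoc, ← map_mul, mul_inv_cancel, map_one, mul_one]

lemma skewCoeff_mul_mem (hS : IsSkewGroupRing R G α S ι σ) (I : TwoSidedIdeal R)
    (x y : S) (k : G)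
    (hmem : ∀ g h : G, skewCoeff hS x g * α g (skewCoeff hS y h) ∈ I) :
    skewCoeff hS (x * y) k ∈ I := by
  classical
  rw [skewCoeff_mul hS, Finsupp.sum_apply]
  refine TwoSidedIdeal.finsetSum_mem I _ _ fun g hg => ?_
  dsimp only
  rw [Finsupp.sum_apply]
  refine TwoSidedIdeal.finsetSum_mem I _ _ fun h hh => ?_
  dsimp only
  rw [Finsupp.single_apply]
  split_ifs
  · exact hmem g h
  · exact I.zero_mem

end Aux

/-- If `R` is a commutative integral domain and `α` is a faithful action of `G` on `R`,
then `R` is `G`-simple if and only if the skew group ring `R*_α G` is simple. -/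
theorem isGSimple_iff_skewGroupRing_isSimpleRing_of_domain_faithful
    {R : Type*} [CommRing R] [IsDomain R] {G : Type*} [Group G] (α : G →* RingAut R)
    (hfaithful : Function.Injective α)
    {S : Type*} [Ring S] (ι : R →+* S) (σ : G →* S)
    (hS : IsSkewGroupRing R G α S ι σ) :
    IsGSimple R α ↔ IsSimpleRing S := by
  classical
  constructor
  · rintro ⟨hRnt, hGs⟩
    haveI : Nontrivial R := hRnt
    haveI hSnt : Nontrivial S := ⟨1, 0, fun h => by
      have h1 : skewCoeff hS (1 : S) = Finsupp.single 1 1 := by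
        rw [← map_one ι, skewCoeff_iota]
      rw [h, skewCoeff_zero hS] at h1
      exact one_ne_zero (Finsupp.single_eq_zero.1 h1.symm)⟩
    haveI : Nontrivial (TwoSidedIdeal S) := ⟨⊥, ⊤, fun h => by
      have h1 : (1 : S) ∈ (⊥ : TwoSidedIdeal S) := h.symm ▸ TwoSidedIdeal.mem_top _
      exact one_ne_zero ((TwoSidedIdeal.mem_bot _).1 h1)⟩
    refine ⟨⟨fun J => ?_⟩⟩
    by_cases hJbot : J = ⊥
    · exact Or.inl hJbot
    right
    have hex0 : ∃ s, s ∈ J ∧ s ≠ 0 := by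
      by_contra h
      push_neg at h
      exact hJbot (TwoSidedIdeal.ext fun x =>
        ⟨fun hx => (TwoSidedIdeal.mem_bot _).2 (h x hx),
         fun hx => by rw [(TwoSidedIdeal.mem_bot _).1 hx]; exact J.zero_mem⟩)
    have hex : ∃ n, ∃ s, s ∈ J ∧ s ≠ 0 ∧ (skewCoeff hS s).support.card = n := by
      obtain ⟨s, hsJ, hs0⟩ := hex0
      exact ⟨_, s, hsJ, hs0, rfl⟩
    obtain ⟨s, hsJ, hs0, hcard⟩ := Nat.find_spec hex
    set n := Nat.find hex with hn
    have hmin : ∀ t, t ∈ J → t ≠ 0 → n ≤ (skewCoeff hS t).support.card :=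
      fun t ht ht0 => Nat.find_min' hex ⟨t, ht, ht0, rfl⟩
    have hcne : skewCoeff hS s ≠ 0 := fun h => hs0 (skewCoeff_eq_zero hS h)
    obtain ⟨g₀, hg₀⟩ := Finsupp.support_nonempty_iff.2 hcne
    set s' := s * σ g₀⁻¹ with hs'def
    have hs'J : s' ∈ J := J.mul_mem_right s (σ g₀⁻¹) hsJ
    have hinj : Function.Injective (· * g₀⁻¹ : G → G) := fun a b hab => by
      simpa using congrArg (· * g₀) hab
    have hc' : skewCoeff hS s' = Finsupp.mapDomain (· * g₀⁻¹) (skewCoeff hS s) :=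
      skewCoeff_mul_sigma hS s g₀⁻¹
    have hc'1 : skewCoeff hS s' 1 = skewCoeff hS s g₀ := by
      have h2 := Finsupp.mapDomain_apply hinj (skewCoeff hS s) g₀
      rw [hc']
      simpa using h2
    have hc'1ne : skewCoeff hS s' 1 ≠ 0 := by
      rw [hc'1]; exact Finsupp.mem_support_iff.1 hg₀
    have hsupp' : (skewCoeff hS s').support.card = n := by
      rw [hc', Finsupp.mapDomain_support_of_injective hinj,
        Finset.card_image_of_injective _ hinj, hcard]
    have h1mem : (1 : G) ∈ (skewCoeff hS s').support := Finsupp.mem_support_iff.2 hc'1ne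
    have key : ∀ (a : R) (k : G), skewCoeff hS s' k * (α k a - a) = 0 := by
      intro a k
      set t := s' * ι a - ι a * s' with htdef
      have htJ : t ∈ J := J.sub_mem (J.mul_mem_right _ _ hs'J) (J.mul_mem_left _ _ hs'J)
      have hct : ∀ m, skewCoeff hS t m
          = skewCoeff hS s' m * α m a - a * skewCoeff hS s' m := by
        intro m
        have hsub : skewCoeff hS t = skewCoeff hS (s' * ι a) - skewCoeff hS (ι a * s') :=
          map_sub (skewCoeffHom hS) _ _
        rw [hsub, Finsupp.sub_apply, skewCoeff_mul_iota hS, skewCoeff_iota_mul hS]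
      have hct1 : skewCoeff hS t 1 = 0 := by
        rw [hct 1, show (α (1:G)) a = a by rw [map_one]; rfl, mul_comm, sub_self]
      have htsupp : (skewCoeff hS t).support ⊆ (skewCoeff hS s').support.erase 1 := by
        intro m hm
        rw [Finsupp.mem_support_iff] at hm
        rw [Finset.mem_erase, Finsupp.mem_support_iff]
        refine ⟨fun h1 => hm (h1 ▸ hct1), fun h0 => hm ?_⟩
        rw [hct m, h0, zero_mul, mul_zero, sub_zero]
      have ht0 : t = 0 := by
        by_contra h0
        have h1 := hmin t htJ h0
        have h2 : (skewCoeff hS t).support.card < n :=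
          calc (skewCoeff hS t).support.card ≤ ((skewCoeff hS s').support.erase 1).card :=
              Finset.card_le_card htsupp
            _ < (skewCoeff hS s').support.card := Finset.card_erase_lt_of_mem h1mem
            _ = n := hsupp'
        omega
      have hz : skewCoeff hS t k = 0 := by rw [ht0, skewCoeff_zero]; rfl
      rw [hct k, mul_comm a] at hz
      rw [mul_sub]
      exact hz
    have hsub1 : (skewCoeff hS s').support ⊆ {1} := by
      intro k hk
      rw [Finset.mem_singleton]
      by_contra hk1
      have hαk : α k ≠ 1 := fun h => hk1 (hfaithful (by rw [h, map_one]))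
      have hax : ∃ a : R, α k a ≠ a := by
        by_contra h
        push_neg at h
        exact hαk (RingEquiv.ext fun a => h a)
      obtain ⟨a, ha⟩ := hax
      rcases mul_eq_zero.1 (key a k) with h | h
      · exact Finsupp.mem_support_iff.1 hk h
      · exact ha (sub_eq_zero.1 h)
    have hsingle : skewCoeff hS s' = Finsupp.single 1 (skewCoeff hS s' 1) := by
      ext k
      by_cases hk : k = 1
      · subst hk; simp
      · have hns : k ∉ (skewCoeff hS s').support :=
          fun h => hk (Finset.mem_singleton.1 (hsub1 h))
        rw [Finsupp.notMem_support_iff.1 hns, Finsupp.single_apply, if_neg (Ne.symm hk)]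
    have hs'eq : s' = ι (skewCoeff hS s' 1) := by
      conv_lhs => rw [skewCoeff_repr hS s']
      rw [hsingle, Finsupp.sum_single_index (by simp)]
      simp
    let I : TwoSidedIdeal R := TwoSidedIdeal.mk' {r : R | ι r ∈ J}
      (by simp only [Set.mem_setOf_eq, map_zero]; exact J.zero_mem)
      (fun {x y} hx hy => by simp only [Set.mem_setOf_eq, map_add]; exact J.add_mem hx hy)
      (fun {x} hx => by simp only [Set.mem_setOf_eq, map_neg]; exact J.neg_mem hx)
      (fun {x y} hy => by simp only [Set.mem_setOf_eq, map_mul]; exact J.mul_mem_left _ _ hy)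
      (fun {x y} hx => by simp only [Set.mem_setOf_eq, map_mul]; exact J.mul_mem_right _ _ hx)
    have hImem : ∀ r : R, r ∈ I ↔ ι r ∈ J := fun r => TwoSidedIdeal.mem_mk' _ _ _ _ _ _ r
    have hIinv : ∀ g : G, ∀ r ∈ I, α g r ∈ I := by
      intro g r hr
      rw [hImem] at hr ⊢
      rw [← sigma_conj hS]
      exact J.mul_mem_right _ _ (J.mul_mem_left _ _ hr)
    rcases hGs I hIinv with hbot | htop
    · exfalso
      have hm : skewCoeff hS s' 1 ∈ I := (hImem _).2 (hs'eq ▸ hs'J)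
      rw [hbot, TwoSidedIdeal.mem_bot _] at hm
      exact hc'1ne hm
    · have h1I : (1 : R) ∈ I := htop ▸ TwoSidedIdeal.mem_top _
      have h1J : (1 : S) ∈ J := by
        have := (hImem 1).1 h1I
        rwa [map_one] at this
      exact (TwoSidedIdeal.one_mem_iff J).1 h1J
  · intro hsimple
    haveI := hsimple
    constructor
    · by_contra hR
      rw [not_nontrivial_iff_subsingleton] at hR
      have h10 : (1 : S) = 0 :=
        skewCoeff_eq_zero hS (Finsupp.ext fun g => Subsingleton.elim _ _)
      exact one_ne_zero h10
    · intro I hIinv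
      by_cases hIbot : I = ⊥
      · exact Or.inl hIbot
      right
      obtain ⟨r, hrI, hr0⟩ : ∃ r, r ∈ I ∧ r ≠ 0 := by
        by_contra h
        push_neg at h
        exact hIbot (TwoSidedIdeal.ext fun x =>
          ⟨fun hx => (TwoSidedIdeal.mem_bot _).2 (h x hx),
           fun hx => by rw [(TwoSidedIdeal.mem_bot _).1 hx]; exact I.zero_mem⟩)
      let J : TwoSidedIdeal S := TwoSidedIdeal.mk' {s : S | ∀ k, skewCoeff hS s k ∈ I}
        (fun k => by rw [skewCoeff_zero hS]; simp only [Finsupp.coe_zero, Pi.zero_apply]; exact I.zero_mem)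
        (fun {x y} hx hy k => by
          rw [skewCoeff_add hS, Finsupp.add_apply]; exact I.add_mem (hx k) (hy k))
        (fun {x} hx k => by
          have hneg : skewCoeff hS (-x) = -skewCoeff hS x := map_neg (skewCoeffHom hS) x
          rw [hneg, Finsupp.neg_apply]; exact I.neg_mem (hx k))
        (fun {x y} hy k => skewCoeff_mul_mem hS I x y k fun g h =>
          I.mul_mem_left _ _ (hIinv g _ (hy h)))
        (fun {x y} hx k => skewCoeff_mul_mem hS I x y k fun g h =>
          I.mul_mem_right _ _ (hx g))
      have hJmem : ∀ s : S, s ∈ J ↔ ∀ k, skewCoeff hS s k ∈ I :=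
        fun s => TwoSidedIdeal.mem_mk' _ _ _ _ _ _ s
      have hrJ : ι r ∈ J := (hJmem _).2 (by
        intro k
        rw [skewCoeff_iota hS, Finsupp.single_apply]
        split_ifs
        · exact hrI
        · exact I.zero_mem)
      have hJne : J ≠ ⊥ := fun h => by
        rw [h, TwoSidedIdeal.mem_bot _] at hrJ
        exact hr0 (iota_injective hS (by rw [hrJ, map_zero]))
      have h1J : (1 : S) ∈ J := IsSimpleRing.one_mem_of_ne_bot J hJne
      have h1I : (1 : R) ∈ I := by
        have hc1 : skewCoeff hS (1 : S) = Finsupp.single 1 1 := by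
          rw [← map_one ι, skewCoeff_iota]
        have := (hJmem 1).1 h1J 1
        rw [hc1] at this
        simpa using this
      exact (TwoSidedIdeal.one_mem_iff I).1 h1I
end

section
/- Let R be a commutative semiprime (i.e., reduced) ring and f a ring automorphism of R. Then the annihilator in R of the set {r − f(r) : r ∈ R} is nonzero if and only if there exists a nonzero ideal I of R such that f restricts to the identity on I. -/
/-- Let `R` be a commutative semiprime (i.e. reduced) ring and `f` a ring automorphism
of `R`. Then the annihilator in `R` of `{r - f r : r ∈ R}` is nonzero if and only if
there is a nonzero ideal `I` of `R` on which `f` restricts to the identity. -/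
theorem ann_id_sub_ne_zero_iff_exists_ideal_id
    {R : Type*} [CommRing R] [IsReduced R] (f : R ≃+* R) :
    (∃ x : R, x ≠ 0 ∧ ∀ r : R, x * (r - f r) = 0) ↔
      ∃ I : Ideal R, I ≠ ⊥ ∧ ∀ a ∈ I, f a = a := by
  constructor
  · rintro ⟨x, hx, hann⟩
    -- f x also annihilates (id - f)(R)
    have hann' : ∀ r : R, f x * (r - f r) = 0 := by
      intro r
      have := hann (f.symm r)
      have h2 := congrArg f this
      simpa [map_mul, map_sub] using h2
    -- (x - f x)^2 = 0
    have hsq : (x - f x) * (x - f x) = 0 := by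
      have h1 := hann x
      have h2 := hann' x
      ring_nf
      ring_nf at h1 h2
      linear_combination h1 - h2
    have hfx : f x = x := by
      have : (x - f x) = 0 := by
        have := IsReduced.eq_zero (x - f x) ⟨2, by rw [pow_two]; exact hsq⟩
        exact this
      exact (sub_eq_zero.mp this).symm
    refine ⟨Ideal.span {x}, ?_, ?_⟩
    · simp [Ideal.span_singleton_eq_bot, hx]
    · intro a ha
      obtain ⟨c, rfl⟩ := Ideal.mem_span_singleton'.mp ha
      have := hann c
      rw [map_mul, hfx]
      have : f c * x = c * x := by linear_combination -this
      rw [this]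
  · rintro ⟨I, hI, hid⟩
    obtain ⟨a, haI, ha⟩ := Submodule.exists_mem_ne_zero_of_ne_bot hI
    refine ⟨a, ha, fun r => ?_⟩
    have h1 : f (a * r) = a * r := hid _ (I.mul_mem_right r haI)
    have h2 : f a = a := hid a haI
    rw [map_mul, h2] at h1
    linear_combination -h1
end

section
/- Let R be a commutative von Neumann regular ring and f a ring automorphism of R. Then the annihilator in R of the set {r − f(r) : r ∈ R} is nonzero if and only if there exists a nonzero idempotent e ∈ R such that f restricts to the identity on the ideal eR. -/
/-- Let `R` be a commutative von Neumann regular ring and `f` a ring automorphism of `R`.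
Then the annihilator in `R` of `{r - f r : r ∈ R}` is nonzero if and only if there is a
nonzero idempotent `e ∈ R` such that `f` restricts to the identity on the ideal `eR`. -/
theorem ann_id_sub_ne_zero_iff_exists_idempotent_id
    {R : Type*} [CommRing R] (hreg : ∀ a : R, ∃ x : R, a * x * a = a) (f : R ≃+* R) :
    (∃ x : R, x ≠ 0 ∧ ∀ r : R, x * (r - f r) = 0) ↔
      ∃ e : R, IsIdempotentElem e ∧ e ≠ 0 ∧ ∀ r : R, f (e * r) = e * r := by
  constructor
  · rintro ⟨x, hx0, hx⟩
    obtain ⟨y, hy⟩ := hreg x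
    set e := x * y with he
    have hex : e * x = x := hy
    have eann : ∀ r : R, e * (r - f r) = 0 := by
      intro r
      calc e * (r - f r) = y * (x * (r - f r)) := by ring
        _ = 0 := by rw [hx r, mul_zero]
    have hne : e ≠ 0 := by
      intro h
      apply hx0
      rw [← hex, h, zero_mul]
    have hidem : IsIdempotentElem e := by
      show e * e = e
      calc e * e = (x * y * x) * y := by ring
        _ = e := by rw [hy]
    have fe_ann : ∀ r : R, f e * (r - f r) = 0 := by
      intro r
      have := congrArg f (eann (f.symm r))
      simpa [map_mul, map_sub] using this
    have h1 : e = e * f e := by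
      have h := eann e
      have : e * e - e * f e = 0 := by linear_combination h
      have := sub_eq_zero.mp this
      rw [hidem] at this
      exact this
    have h2 : f e = f e * e := by
      have h := fe_ann e
      have h' : f e * e - f e * f e = 0 := by linear_combination h
      have h'' : f e * e = f e * f e := sub_eq_zero.mp h'
      have h3 : f e * f e = f e := by rw [← map_mul, hidem]
      rw [h3] at h''
      exact h''.symm
    have fe_eq : f e = e := by
      rw [h2, mul_comm, ← h1]
    refine ⟨e, hidem, hne, fun r => ?_⟩
    have h4 : e * f r = e * r := by
      have h := eann r
      have : e * r - e * f r = 0 := by linear_combination h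
      exact (sub_eq_zero.mp this).symm
    rw [map_mul, fe_eq, h4]
  · rintro ⟨e, hidem, hne, hfix⟩
    have fe : f e = e := by simpa using hfix 1
    refine ⟨e, hne, fun r => ?_⟩
    have : e * f r = e * r := by
      calc e * f r = f e * f r := by rw [fe]
        _ = f (e * r) := (map_mul f e r).symm
        _ = e * r := hfix r
    rw [mul_sub, this, sub_self]
end

section
/- Suppose R is a commutative semiprime (reduced) ring and α is an action of a group G on R by ring automorphisms such that the identity is the only element g of G for which α(g) restricts to the identity on some nonzero ideal of R. Then the skew group ring R*_α G is a simple ring if and only if R is G-simple. -/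
section SkewAux

variable {R : Type*} [Ring R] {G : Type*} [Group G]
  {S : Type*} [Ring S] (ι : R →+* S) (σ : G →* S)

/-- The decomposition map `(G →₀ R) →+ S` of a skew group ring. -/
noncomputable def skewPhi : (G →₀ R) →+ S :=
  Finsupp.liftAddHom fun g => (AddMonoidHom.mulRight (σ g)).comp ι.toAddMonoidHom

lemma skewPhi_apply (c : G →₀ R) : skewPhi ι σ c = c.sum fun g r => ι r * σ g := by
  rw [skewPhi, Finsupp.liftAddHom_apply]; rfl

lemma skewPhi_single (g : G) (r : R) : skewPhi ι σ (Finsupp.single g r) = ι r * σ g := by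
  simp [skewPhi]

lemma skewPhi_sum_single (t : Finset G) (v : G → R) :
    skewPhi ι σ (∑ g ∈ t, Finsupp.single g (v g)) = ∑ g ∈ t, ι (v g) * σ g := by
  rw [map_sum]; exact Finset.sum_congr rfl fun g _ => skewPhi_single ι σ g (v g)

lemma skewPhi_eq_sum_support (c : G →₀ R) :
    skewPhi ι σ c = ∑ g ∈ c.support, ι (c g) * σ g := by
  rw [skewPhi_apply]; rfl

lemma skewPhi_iota (r : R) : skewPhi ι σ (Finsupp.single 1 r) = ι r := by
  rw [skewPhi_single, map_one, mul_one]

lemma skewPhi_mul_sigma (c : G →₀ R) (h : G) :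
    skewPhi ι σ c * σ h = skewPhi ι σ (Finsupp.mapDomain (· * h) c) := by
  rw [skewPhi_apply, skewPhi_apply,
    Finsupp.sum_mapDomain_index (by simp) (by intros; simp [add_mul]), Finsupp.sum_mul]
  exact Finsupp.sum_congr fun g _ => by rw [map_mul, mul_assoc]

lemma skewPhi_iota_mul (b : R) (c : G →₀ R) :
    ι b * skewPhi ι σ c = skewPhi ι σ (Finsupp.mapRange (b * ·) (mul_zero b) c) := by
  rw [skewPhi_apply, skewPhi_apply, Finsupp.sum_mapRange_index (by simp), Finsupp.mul_sum]
  exact Finsupp.sum_congr fun g _ => by rw [map_mul, mul_assoc]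

variable {α : G →* RingAut R} (hcomm : ∀ (g : G) (r : R), σ g * ι r = ι (α g r) * σ g)
include hcomm

lemma skewPhi_sigma_mul (h : G) (c : G →₀ R) :
    σ h * skewPhi ι σ c =
      skewPhi ι σ (Finsupp.mapDomain (h * ·) (Finsupp.mapRange (α h) (map_zero _) c)) := by
  rw [skewPhi_apply, skewPhi_apply,
    Finsupp.sum_mapDomain_index (by simp) (by intros; simp [add_mul]),
    Finsupp.sum_mapRange_index (by simp), Finsupp.mul_sum]
  refine Finsupp.sum_congr fun g _ => ?_
  rw [← mul_assoc, hcomm, map_mul, mul_assoc]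

lemma skewPhi_mul_iota (c : G →₀ R) (b : R) :
    skewPhi ι σ c * ι b =
      skewPhi ι σ (∑ g ∈ c.support, Finsupp.single g (c g * α g b)) := by
  rw [skewPhi_sum_single, skewPhi_eq_sum_support, Finset.sum_mul]
  refine Finset.sum_congr rfl fun g _ => ?_
  rw [mul_assoc, hcomm, map_mul, mul_assoc]

end SkewAux


/-- Suppose `R` is a commutative semiprime (reduced) ring and `α` an action of a group `G`
on `R` such that `1` is the only element of `G` whose image restricts to the identity on
some nonzero ideal of `R`. Then the skew group ring `R*_α G` is simple if and only if `R`
is `G`-simple. -/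
theorem skewGroupRing_isSimpleRing_iff_isGSimple_of_id_on_ideal
    {R : Type*} [CommRing R] [IsReduced R] {G : Type*} [Group G] (α : G →* RingAut R)
    (hid : ∀ g : G, (∃ I : Ideal R, I ≠ ⊥ ∧ ∀ r ∈ I, α g r = r) → g = 1)
    {S : Type*} [Ring S] (ι : R →+* S) (σ : G →* S)
    (hS : IsSkewGroupRing R G α S ι σ) :
    IsSimpleRing S ↔ IsGSimple R α := by
  classical
  obtain ⟨hrepr, hcomm⟩ := hS
  have hrepr' : ∀ s : S, ∃! c : G →₀ R, s = skewPhi ι σ c := by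
    intro s
    simpa only [skewPhi_apply] using hrepr s
  choose rep hrep hrepu using hrepr'
  have rep_eq : ∀ {s : S} {c : G →₀ R}, skewPhi ι σ c = s → rep s = c :=
    fun {s c} h => (hrepu s c h.symm).symm
  have hgg : ∀ (g : G) (r : R), α g (α g⁻¹ r) = r := by
    intro g r
    calc α g (α g⁻¹ r) = (α g * α g⁻¹) r := rfl
      _ = α (g * g⁻¹) r := by rw [map_mul]
      _ = r := by rw [mul_inv_cancel, map_one]; rfl
  have hiota_inj : Function.Injective ι := by
    intro a b h
    have h2 : skewPhi ι σ (Finsupp.single 1 a) = skewPhi ι σ (Finsupp.single 1 b) := by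
      rw [skewPhi_iota, skewPhi_iota, h]
    exact Finsupp.single_injective 1 ((rep_eq h2).symm.trans (rep_eq rfl))
  have heval : ∀ (t : Finset G) (v : G → R) (g : G),
      (∑ g' ∈ t, Finsupp.single g' (v g')) g = if g ∈ t then v g else 0 := by
    intro t v g
    rw [Finsupp.finset_sum_apply]
    simp only [Finsupp.single_apply]
    exact Finset.sum_ite_eq' t g v
  constructor
  · -- simple → G-simple
    intro hsimp
    have hRnt : Nontrivial R := by
      by_contra hR
      have hsub : Subsingleton R := not_nontrivial_iff_subsingleton.mp hR
      have hSsub : Subsingleton S := by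
        refine ⟨fun a b => ?_⟩
        rw [hrep a, hrep b]
        exact congrArg _ (Finsupp.ext fun g => Subsingleton.elim _ _)
      haveI := hsimp.simple
      exact absurd (SetLike.ext fun x : S => iff_of_true
        ((TwoSidedIdeal.mem_bot _).mpr (Subsingleton.elim x 0)) (TwoSidedIdeal.mem_top _) :
        (⊥ : TwoSidedIdeal S) = ⊤) bot_ne_top
    refine ⟨hRnt, fun I hinv => ?_⟩
    by_cases hIbot : I = ⊥
    · exact Or.inl hIbot
    right
    by_contra hItop
    obtain ⟨r₀, hr₀I, hr₀⟩ : ∃ r ∈ I, r ≠ 0 := by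
      by_contra h
      push_neg at h
      exact hIbot (SetLike.ext fun x => ⟨fun hx => (TwoSidedIdeal.mem_bot _).mpr (h x hx),
        fun hx => by rw [(TwoSidedIdeal.mem_bot _).mp hx]; exact I.zero_mem⟩)
    -- the ideal J of S consisting of elements with all coefficients in I
    set Jc : Set S := {s | ∀ g : G, rep s g ∈ I} with hJc
    have hmemJc : ∀ (c : G →₀ R), (∀ g, c g ∈ I) → skewPhi ι σ c ∈ Jc := by
      intro c hc g
      rw [rep_eq rfl]
      exact hc g
    have hzeroJc : (0 : S) ∈ Jc := by
      intro g
      rw [rep_eq (map_zero _), Finsupp.coe_zero, Pi.zero_apply]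
      exact I.zero_mem
    have haddJc : ∀ {x y : S}, x ∈ Jc → y ∈ Jc → x + y ∈ Jc := by
      intro x y hx hy g
      have : skewPhi ι σ (rep x + rep y) = x + y := by rw [map_add, ← hrep, ← hrep]
      rw [rep_eq this, Finsupp.add_apply]
      exact I.add_mem (hx g) (hy g)
    have hnegJc : ∀ {x : S}, x ∈ Jc → -x ∈ Jc := by
      intro x hx g
      have : skewPhi ι σ (-rep x) = -x := by rw [map_neg, ← hrep]
      rw [rep_eq this, Finsupp.neg_apply]
      exact I.neg_mem (hx g)
    have hsumJc : ∀ (t : Finset G) (f : G → S), (∀ g ∈ t, f g ∈ Jc) →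
        (∑ g ∈ t, f g) ∈ Jc := by
      intro t f hf
      exact Finset.sum_induction f (· ∈ Jc) (fun a b ha hb => haddJc ha hb) hzeroJc hf
    have hiotaL : ∀ (b : R) {x : S}, x ∈ Jc → ι b * x ∈ Jc := by
      intro b x hx g
      have : skewPhi ι σ (Finsupp.mapRange (b * ·) (mul_zero b) (rep x)) = ι b * x := by
        rw [← skewPhi_iota_mul, ← hrep]
      rw [rep_eq this, Finsupp.mapRange_apply]
      exact I.mul_mem_left _ _ (hx g)
    have hsigmaL : ∀ (h : G) {x : S}, x ∈ Jc → σ h * x ∈ Jc := by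
      intro h x hx g
      have key : skewPhi ι σ (Finsupp.mapDomain (h * ·)
          (Finsupp.mapRange (α h) (map_zero _) (rep x))) = σ h * x := by
        rw [← skewPhi_sigma_mul ι σ hcomm, ← hrep]
      rw [rep_eq key]
      rw [show ((h * ·) : G → G) = ⇑(Equiv.mulLeft h) from rfl,
        Finsupp.mapDomain_equiv_apply, Finsupp.mapRange_apply]
      exact hinv h _ (hx _)
    have hiotaR : ∀ (b : R) {x : S}, x ∈ Jc → x * ι b ∈ Jc := by
      intro b x hx g
      have key : skewPhi ι σ (∑ g' ∈ (rep x).support,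
          Finsupp.single g' ((rep x) g' * α g' b)) = x * ι b := by
        rw [← skewPhi_mul_iota ι σ hcomm, ← hrep]
      rw [rep_eq key, heval]
      split
      · exact I.mul_mem_right _ _ (hx g)
      · exact I.zero_mem
    have hsigmaR : ∀ (h : G) {x : S}, x ∈ Jc → x * σ h ∈ Jc := by
      intro h x hx g
      have key : skewPhi ι σ (Finsupp.mapDomain (· * h) (rep x)) = x * σ h := by
        rw [← skewPhi_mul_sigma, ← hrep]
      rw [rep_eq key,
        show ((· * h) : G → G) = ⇑(Equiv.mulRight h) from rfl,
        Finsupp.mapDomain_equiv_apply]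
      exact hx _
    have hmulL : ∀ {x y : S}, y ∈ Jc → x * y ∈ Jc := by
      intro x y hy
      have hx : x = ∑ h ∈ (rep x).support, ι ((rep x) h) * σ h := by
        rw [← skewPhi_eq_sum_support, ← hrep]
      rw [hx, Finset.sum_mul]
      refine hsumJc _ _ fun h _ => ?_
      rw [mul_assoc]
      exact hiotaL _ (hsigmaL _ hy)
    have hmulR : ∀ {x y : S}, x ∈ Jc → x * y ∈ Jc := by
      intro x y hx
      have hy : y = ∑ h ∈ (rep y).support, ι ((rep y) h) * σ h := by
        rw [← skewPhi_eq_sum_support, ← hrep]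
      rw [hy, Finset.mul_sum]
      refine hsumJc _ _ fun h _ => ?_
      rw [← mul_assoc]
      exact hsigmaR _ (hiotaR _ hx)
    set J : TwoSidedIdeal S := TwoSidedIdeal.mk' Jc hzeroJc haddJc hnegJc hmulL hmulR with hJ
    have hmemJ : ∀ {s : S}, s ∈ J ↔ s ∈ Jc := fun {s} =>
      TwoSidedIdeal.mem_mk' _ _ _ _ _ _ s
    have hiota_r₀_J : ι r₀ ∈ J := by
      rw [hmemJ]
      intro g
      rw [rep_eq (skewPhi_iota ι σ r₀), Finsupp.single_apply]
      split
      · exact hr₀I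
      · exact I.zero_mem
    rcases hsimp.simple.eq_bot_or_eq_top J with hbot | htop
    · rw [hbot] at hiota_r₀_J
      replace hiota_r₀_J := (TwoSidedIdeal.mem_bot _).mp hiota_r₀_J
      exact hr₀ (hiota_inj (by rw [hiota_r₀_J, map_zero]))
    · have h1 : (1 : S) ∈ J := by rw [htop]; exact (TwoSidedIdeal.mem_top _)
      rw [hmemJ] at h1
      have := h1 1
      rw [rep_eq (by rw [skewPhi_iota, map_one] : skewPhi ι σ (Finsupp.single 1 1) = 1)]
        at this
      rw [Finsupp.single_eq_same] at this
      exact hItop (I.eq_top this)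
  · -- G-simple → simple
    rintro ⟨hR, hG⟩
    haveI := hR
    have h1S : (1 : S) ≠ 0 := by
      intro h
      have : ι 1 = ι 0 := by rw [map_one, map_zero, h]
      exact one_ne_zero (hiota_inj this)
    haveI : Nontrivial S := ⟨1, 0, h1S⟩
    haveI : Nontrivial (TwoSidedIdeal S) := ⟨⊥, ⊤, fun h => by
      have : (1 : S) ∈ (⊥ : TwoSidedIdeal S) := by rw [h]; exact (TwoSidedIdeal.mem_top _)
      exact h1S ((TwoSidedIdeal.mem_bot _).mp this)⟩
    refine ⟨⟨fun J => ?_⟩⟩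
    by_cases hJbot : J = ⊥
    · exact Or.inl hJbot
    right
    obtain ⟨x, hxJ, hx0⟩ : ∃ x ∈ J, x ≠ 0 := by
      by_contra h
      push_neg at h
      exact hJbot (SetLike.ext fun x => ⟨fun hx => (TwoSidedIdeal.mem_bot _).mpr (h x hx),
        fun hx => by rw [(TwoSidedIdeal.mem_bot _).mp hx]; exact J.zero_mem⟩)
    -- minimal support size of nonzero elements of J
    set K : Set ℕ := {n | ∃ c : G →₀ R, skewPhi ι σ c ∈ J ∧ c ≠ 0 ∧ c.support.card = n}
      with hK
    have hKne : (rep x).support.card ∈ K := by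
      refine ⟨rep x, ?_, ?_, rfl⟩
      · rw [← hrep]; exact hxJ
      · intro h
        exact hx0 (by rw [hrep x, h, map_zero])
    set n : ℕ := sInf K with hn
    obtain ⟨c, hcJ, hc0, hcn⟩ : n ∈ K := Nat.sInf_mem (Set.nonempty_of_mem hKne)
    have hmin : ∀ d : G →₀ R, skewPhi ι σ d ∈ J → d.support.card < n → d = 0 := by
      intro d hdJ hdlt
      by_contra hd0
      exact absurd (Nat.sInf_le (show d.support.card ∈ K from ⟨d, hdJ, hd0, rfl⟩)) (not_le.2 hdlt)
    obtain ⟨g₀, hg₀⟩ := Finsupp.support_nonempty_iff.mpr hc0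
    have hinjmap : Function.Injective (· * g₀⁻¹ : G → G) := mul_left_injective g₀⁻¹
    set c₁ : G →₀ R := Finsupp.mapDomain (· * g₀⁻¹) c with hc₁
    have hc₁J : skewPhi ι σ c₁ ∈ J := by
      rw [hc₁, ← skewPhi_mul_sigma]
      exact J.mul_mem_right _ _ hcJ
    have hc₁supp : c₁.support = c.support.image (· * g₀⁻¹) :=
      Finsupp.mapDomain_support_of_injective hinjmap c
    have hc₁card : c₁.support.card = n := by
      rw [hc₁supp, Finset.card_image_of_injective _ hinjmap, hcn]
    have h1mem : (1 : G) ∈ c₁.support := by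
      have hval : c₁ (g₀ * g₀⁻¹) = c g₀ := Finsupp.mapDomain_apply hinjmap c g₀
      rw [mul_inv_cancel] at hval
      rw [Finsupp.mem_support_iff, hval]
      exact Finsupp.mem_support_iff.1 hg₀
    have hnpos : 0 < n := by
      rw [← hc₁card]
      exact Finset.card_pos.2 ⟨1, h1mem⟩
    -- minimality forces the support of c₁ to be {1}
    have hsupp : c₁.support ⊆ {1} := by
      intro g hg
      rw [Finset.mem_singleton]
      by_contra hg1
      have hccne : c₁ g ≠ 0 := Finsupp.mem_support_iff.1 hg
      have hrel : ∀ b : R, c₁ g * b = c₁ g * α g b := by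
        intro b
        set d : G →₀ R := Finsupp.mapRange (b * ·) (mul_zero b) c₁ -
          (∑ g' ∈ c₁.support, Finsupp.single g' (c₁ g' * α g' b)) with hd
        have hdJ : skewPhi ι σ d ∈ J := by
          rw [hd, map_sub, ← skewPhi_iota_mul, ← skewPhi_mul_iota ι σ hcomm]
          exact J.sub_mem (J.mul_mem_left _ _ hc₁J) (J.mul_mem_right _ _ hc₁J)
        have hdval : ∀ g' : G, d g' = c₁ g' * (b - α g' b) := by
          intro g'
          rw [hd, Finsupp.sub_apply, Finsupp.mapRange_apply, heval]
          split
          · rw [mul_sub, mul_comm b]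
          · rename_i hns
            simp [Finsupp.notMem_support_iff.1 hns]
        have hdsupp : d.support ⊆ c₁.support.erase 1 := by
          intro g' hg'
          have hg'0 : d g' ≠ 0 := Finsupp.mem_support_iff.1 hg'
          rw [Finset.mem_erase]
          constructor
          · intro h
            apply hg'0
            have h1b : (α (1:G)) b = b := by rw [map_one α]; rfl
            rw [hdval, h, h1b, sub_self, mul_zero]
          · rw [Finsupp.mem_support_iff]
            intro h
            apply hg'0
            rw [hdval, h, zero_mul]
        have hdzero : d = 0 := by
          apply hmin d hdJ
          calc d.support.card ≤ (c₁.support.erase 1).card := Finset.card_le_card hdsupp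
            _ = c₁.support.card - 1 := Finset.card_erase_of_mem h1mem
            _ < n := by rw [hc₁card]; exact Nat.sub_lt hnpos one_pos
        have hz : d g = 0 := by rw [hdzero]; rfl
        rw [hdval, mul_sub] at hz
        exact (sub_eq_zero.mp hz)
      -- the reducedness argument: α g fixes c₁ g
      set cc : R := c₁ g with hccdef
      set cc' : R := α g cc with hcc'def
      have hC : cc * cc = cc * cc' := hrel cc
      have hA : cc * α g⁻¹ cc = cc * cc := by
        have h := hrel (α g⁻¹ cc)
        rw [hgg] at h
        exact h
      have hB : cc' * cc = cc' * cc' := by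
        have h := congrArg (α g) hA
        rwa [map_mul, map_mul, hgg] at h
      have hsq : (cc' - cc) ^ 2 = 0 := by linear_combination hC - hB
      have hfix : cc' = cc := by
        have : cc' - cc = 0 := IsNilpotent.eq_zero ⟨2, hsq⟩
        exact sub_eq_zero.mp this
      -- α g is the identity on the nonzero ideal generated by cc
      have : g = 1 := by
        refine hid g ⟨Ideal.span {cc}, fun h => hccne ?_, fun r hr => ?_⟩
        · exact Ideal.span_singleton_eq_bot.mp h
        · obtain ⟨a, rfl⟩ := Ideal.mem_span_singleton'.mp hr
          rw [map_mul, ← hcc'def, hfix]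
          have := hrel a
          linear_combination -this
      exact hg1 this
    -- so c₁ is supported at 1 only, and J contains a nonzero element of ι(R)
    have hc₁eq : c₁ = Finsupp.single 1 (c₁ 1) := Finsupp.support_subset_singleton.mp hsupp
    have hiotamem : ι (c₁ 1) ∈ J := by
      rw [← skewPhi_iota ι σ (c₁ 1), ← hc₁eq]
      exact hc₁J
    have hc₁1ne : c₁ 1 ≠ 0 := Finsupp.mem_support_iff.mp h1mem
    -- the preimage ideal in R
    set Ic : Set R := {r | ι r ∈ J} with hIc
    have hIzero : (0 : R) ∈ Ic := by simp only [hIc, Set.mem_setOf_eq, map_zero]; exact J.zero_mem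
    have hIadd : ∀ {a b : R}, a ∈ Ic → b ∈ Ic → a + b ∈ Ic := by
      intro a b ha hb
      simp only [hIc, Set.mem_setOf_eq, map_add]
      exact J.add_mem ha hb
    have hIneg : ∀ {a : R}, a ∈ Ic → -a ∈ Ic := by
      intro a ha
      simp only [hIc, Set.mem_setOf_eq, map_neg]
      exact J.neg_mem ha
    have hImulL : ∀ {a b : R}, b ∈ Ic → a * b ∈ Ic := by
      intro a b hb
      simp only [hIc, Set.mem_setOf_eq, map_mul]
      exact J.mul_mem_left _ _ hb
    have hImulR : ∀ {a b : R}, a ∈ Ic → a * b ∈ Ic := by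
      intro a b ha
      simp only [hIc, Set.mem_setOf_eq, map_mul]
      exact J.mul_mem_right _ _ ha
    set I : TwoSidedIdeal R := TwoSidedIdeal.mk' Ic hIzero hIadd hIneg hImulL hImulR with hI
    have hmemI : ∀ {r : R}, r ∈ I ↔ ι r ∈ J := fun {r} =>
      TwoSidedIdeal.mem_mk' _ _ _ _ _ _ r
    have hIinv : ∀ (g : G), ∀ r ∈ I, α g r ∈ I := by
      intro g r hr
      rw [hmemI] at hr ⊢
      have key : ι (α g r) = σ g * ι r * σ g⁻¹ := by
        calc ι (α g r) = ι (α g r) * (σ g * σ g⁻¹) := by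
              rw [← map_mul, mul_inv_cancel, map_one, mul_one]
          _ = σ g * ι r * σ g⁻¹ := by rw [← mul_assoc, ← hcomm]
      rw [key]
      exact J.mul_mem_right _ _ (J.mul_mem_left _ _ hr)
    rcases hG I hIinv with hIbot | hItop
    · exfalso
      have : c₁ 1 ∈ I := hmemI.mpr hiotamem
      rw [hIbot] at this
      exact hc₁1ne ((TwoSidedIdeal.mem_bot _).mp this)
    · have h1I : (1 : R) ∈ I := by rw [hItop]; exact (TwoSidedIdeal.mem_top _)
      rw [hmemI, map_one] at h1I
      exact J.eq_top h1I
end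

section
/- Let X be a totally disconnected, compact, Hausdorff topological space, G a group acting on X by homeomorphisms, k a field of characteristic 0, and T the ring of locally constant functions from X to k, with G acting on T by (^g t)(x) = t(g⁻¹(x)). If the only open subsets of X invariant under the G-action are ∅ and X, then T is G-simple. -/
private lemma one_sub_prod_mem {R : Type*} [CommRing R] (I : Ideal R) {ι : Type*}
    (s : Finset ι) (c : ι → R)
    (hs : ∀ i ∈ s, c i ∈ I) : 1 - ∏ i ∈ s, (1 - c i) ∈ I := by
  classical
  induction s using Finset.induction_on with
  | empty => simp only [Finset.prod_empty, sub_self]; exact I.zero_mem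
  | @insert a t hx ih =>
    rw [Finset.prod_insert hx]
    have h1 : c a ∈ I := hs a (Finset.mem_insert_self a t)
    have h2 : 1 - ∏ i ∈ t, (1 - c i) ∈ I := ih fun i hi => hs i (Finset.mem_insert_of_mem hi)
    have : 1 - (1 - c a) * ∏ i ∈ t, (1 - c i)
        = (1 - ∏ i ∈ t, (1 - c i)) + c a * ∏ i ∈ t, (1 - c i) := by ring
    rw [this]
    exact I.add_mem h2 (I.mul_mem_right _ h1)

/-- Let `X` be a (nonempty) totally disconnected compact Hausdorff space, `G` a group
acting on `X` by homeomorphisms, `k` a field of characteristic `0`, and let `G` act on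
the ring `T = LocallyConstant X k` by `(g • t) x = t (g⁻¹ • x)` (formalized as any
homomorphism `α : G →* RingAut T` satisfying this formula). If the only `G`-invariant
open subsets of `X` are `∅` and `X`, then `T` is `G`-simple: `T` is nonzero and its only
`G`-invariant ideals are `0` and `T`. -/
theorem locallyConstant_gSimple_of_no_invariant_open
    {X : Type*} [TopologicalSpace X] [CompactSpace X] [T2Space X]
    [TotallyDisconnectedSpace X] [Nonempty X]
    {k : Type*} [Field k] [CharZero k]
    {G : Type*} [Group G] [MulAction G X] [ContinuousConstSMul G X]
    (α : G →* RingAut (LocallyConstant X k))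
    (hα : ∀ (g : G) (t : LocallyConstant X k) (x : X), α g t x = t (g⁻¹ • x))
    (hopen : ∀ U : Set X, IsOpen U → (∀ g : G, (g • ·) '' U ⊆ U) → U = ∅ ∨ U = Set.univ) :
    Nontrivial (LocallyConstant X k) ∧
      ∀ I : Ideal (LocallyConstant X k),
        (∀ (g : G), ∀ t ∈ I, α g t ∈ I) → I = ⊥ ∨ I = ⊤ := by
  classical
  have hnt : Nontrivial (LocallyConstant X k) := by
    refine ⟨0, 1, fun h => ?_⟩
    obtain ⟨x⟩ := ‹Nonempty X›
    have := congrArg (fun t : LocallyConstant X k => t x) h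
    simp at this
  refine ⟨hnt, fun I hI => ?_⟩
  by_cases hIbot : I = ⊥
  · exact Or.inl hIbot
  right
  obtain ⟨t, htI, ht0⟩ : ∃ t ∈ I, t ≠ 0 := by
    by_contra h
    push_neg at h
    exact hIbot (le_antisymm (fun t ht => by simpa using h t ht) bot_le)
  -- idempotent e ∈ I : indicator of the support of t
  set u : LocallyConstant X k := t.map (·⁻¹) with hu
  set e : LocallyConstant X k := u * t with he
  have heI : e ∈ I := I.mul_mem_left u htI
  have he_eval : ∀ x : X, t x ≠ 0 → e x = 1 := fun x hx => by
    simp [he, hu, LocallyConstant.map_apply, inv_mul_cancel₀ hx]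
  -- the support S of t
  set S : Set X := ⇑t ⁻¹' {0}ᶜ with hS
  have hSopen : IsOpen S := t.isLocallyConstant _
  have hSne : S.Nonempty := by
    rcases Set.eq_empty_or_nonempty S with h | h
    · exfalso
      apply ht0
      ext x
      have : x ∉ S := h ▸ Set.notMem_empty x
      simpa [hS] using this
    · exact h
  -- the invariant open union
  set U : Set X := ⋃ g : G, (g • ·) '' S with hU
  have hUopen : IsOpen U := by
    refine isOpen_iUnion fun g => ?_
    have : (g • ·) '' S = (g⁻¹ • ·) ⁻¹' S := by
      ext x
      constructor
      · rintro ⟨y, hy, rfl⟩; simpa using hy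
      · intro hx; exact ⟨g⁻¹ • x, hx, by simp⟩
    rw [this]
    exact hSopen.preimage (continuous_const_smul g⁻¹)
  have hUinv : ∀ g : G, (g • ·) '' U ⊆ U := by
    rintro g x ⟨y, hy, rfl⟩
    rw [hU, Set.mem_iUnion] at hy ⊢
    obtain ⟨h, z, hz, rfl⟩ := hy
    exact ⟨g * h, z, hz, by simp [mul_smul]⟩
  have hUuniv : U = Set.univ := by
    rcases hopen U hUopen hUinv with h | h
    · exfalso
      obtain ⟨x, hx⟩ := hSne
      have : x ∈ U := Set.mem_iUnion.2 ⟨1, x, hx, by simp⟩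
      simp [h] at this
    · exact h
  -- finite subcover
  have hopen' : ∀ g : G, IsOpen ((g • ·) '' S : Set X) := by
    intro g
    have h2 : ((g • ·) '' S : Set X) = (g⁻¹ • ·) ⁻¹' S := by
      ext x
      constructor
      · rintro ⟨y, hy, rfl⟩; simpa using hy
      · intro hx; exact ⟨g⁻¹ • x, hx, by simp⟩
    rw [h2]
    exact hSopen.preimage (continuous_const_smul g⁻¹)
  obtain ⟨s, hs⟩ : ∃ s : Finset G, Set.univ ⊆ ⋃ g ∈ s, (g • ·) '' S :=
    isCompact_univ.elim_finite_subcover (fun g : G => (g • ·) '' S) hopen'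
      (by rw [← hUuniv])
  -- 1 ∈ I
  have key : (1 : LocallyConstant X k) - ∏ g ∈ s, (1 - α g e) ∈ I :=
    one_sub_prod_mem I s (fun g => α g e) (fun g _ => hI g e heI)
  have hprod : ∏ g ∈ s, (1 - α g e) = 0 := by
    ext x
    rw [← LocallyConstant.evalRingHom_apply x (∏ g ∈ s, (1 - α g e)), map_prod]
    have hx : x ∈ ⋃ g ∈ s, (g • ·) '' S := hs (Set.mem_univ x)
    simp only [Set.mem_iUnion] at hx
    obtain ⟨g, hg, y, hy, rfl⟩ := hx
    have hty : t y ≠ 0 := hy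
    have h1 : α g e (g • y) = 1 := by
      rw [hα]
      simp only [inv_smul_smul]
      exact he_eval y hty
    refine Finset.prod_eq_zero hg ?_ |>.trans ?_
    · simp only [LocallyConstant.evalRingHom_apply, LocallyConstant.sub_apply,
        LocallyConstant.coe_one, Pi.one_apply, h1, sub_self]
    · simp
  refine Ideal.eq_top_iff_one I |>.2 ?_
  have := key
  rw [hprod, sub_zero] at this
  exact this
end

section
/- Let X be a compact, Hausdorff, totally disconnected topological group, k a field, and T the ring of locally constant functions from X to k. For any element g ∈ X with g ≠ 1, the ring automorphism of T given by t ↦ (x ↦ t(g⁻¹x)) does not restrict to the identity on any nonzero ideal of T; that is, for every nonzero ideal I of T there exists t ∈ I with t(g⁻¹x) ≠ t(x) for some x ∈ X. -/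
/-! Pick `f ∈ I` and a point `x` with `f x ≠ 0`. Since `g ≠ 1`, the points `x` and `g⁻¹ x` differ,
and as `X` is totally separated some clopen set `U` contains `x` but not `g⁻¹ x`. Multiplying `f`
by the characteristic function of `U` gives an element of `I` that is `f x ≠ 0` at `x` and `0` at
`g⁻¹ x`, so translation by `g` moves it. -/

namespace LocallyConstant

theorem exists_mem_ideal_apply_ne {X R : Type*} [TopologicalSpace X] [TotallySeparatedSpace X]
    [Semiring R] {I : Ideal (LocallyConstant X R)} {f : LocallyConstant X R} (hfI : f ∈ I)
    {x y : X} (hfx : f x ≠ 0) (hxy : x ≠ y) : ∃ t ∈ I, t y ≠ t x := by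
  obtain ⟨U, hU, hxU, hyU⟩ := exists_isClopen_of_totally_separated hxy
  refine ⟨charFn R hU * f, I.mul_mem_left _ hfI, ?_⟩
  have hx : (charFn R hU * f) x = f x := by simp [coe_charFn, hxU]
  have hy : (charFn R hU * f) y = 0 := by simp [coe_charFn, Set.notMem_of_mem_compl hyU]
  rw [hx, hy]
  exact hfx.symm

end LocallyConstant

theorem locallyConstant_translation_not_id_on_ideal_general
    {X : Type*} [TopologicalSpace X] [Group X]
    [CompactSpace X] [T2Space X] [TotallyDisconnectedSpace X]
    {k : Type*} [Field k]
    (g : X) (hg : g ≠ 1)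
    (I : Ideal (LocallyConstant X k)) (hI : I ≠ ⊥) :
    ∃ t ∈ I, ∃ x : X, t (g⁻¹ * x) ≠ t x := by
  have : TotallySeparatedSpace X := loc_compact_t2_tot_disc_iff_tot_sep.mp inferInstance
  obtain ⟨f, hfI, hf⟩ := Submodule.exists_mem_ne_zero_of_ne_bot hI
  obtain ⟨x, hfx⟩ : ∃ x, f x ≠ 0 := by
    by_contra! h
    exact hf (LocallyConstant.ext h)
  have hx : x ≠ g⁻¹ * x := (mul_ne_right.mpr (inv_ne_one.mpr hg)).symm
  obtain ⟨t, htI, ht⟩ := LocallyConstant.exists_mem_ideal_apply_ne hfI hfx hx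
  exact ⟨t, htI, x, ht⟩

/-- Let `X` be a compact Hausdorff totally disconnected topological group, `k` a field,
and `T` the ring of locally constant functions `X → k`. For `g ∈ X` with `g ≠ 1`, the
ring automorphism `t ↦ (x ↦ t (g⁻¹ x))` of `T` is not the identity on any nonzero ideal
of `T`: for every nonzero ideal `I` of `T` there is `t ∈ I` with `t (g⁻¹ x) ≠ t x` for
some `x ∈ X`. -/
theorem locallyConstant_translation_not_id_on_ideal
    {X : Type*} [TopologicalSpace X] [Group X] [IsTopologicalGroup X]
    [CompactSpace X] [T2Space X] [TotallyDisconnectedSpace X]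
    {k : Type*} [Field k]
    (g : X) (hg : g ≠ 1)
    (I : Ideal (LocallyConstant X k)) (hI : I ≠ ⊥) :
    ∃ t ∈ I, ∃ x : X, t (g⁻¹ * x) ≠ t x :=
  locallyConstant_translation_not_id_on_ideal_general g hg I hI
end

section
/- Suppose X is a compact, Hausdorff, totally disconnected topological group and G is a dense subgroup of X, acting on X by left multiplication. Let k be a field of characteristic 0, let T be the ring of locally constant functions from X to k, and let α be the induced action of G on T given by (α(g)t)(x) = t(g⁻¹x). Then the skew group ring T*_α G is a simple ring. -/
theorem TwoSidedIdeal.exists_mem_ne_zero_of_ne_bot {R : Type*} [NonUnitalNonAssocRing R]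
    {I : TwoSidedIdeal R} (hI : I ≠ ⊥) : ∃ r ∈ I, r ≠ 0 := by
  by_contra! h
  exact hI (eq_bot_iff.2 fun r hr => (mem_bot R).2 (h r hr))

open Finsupp

namespace IsSkewGroupRing

variable {R : Type*} {G : Type*} [Group G] {S : Type*} [Ring S] {σ : G →* S}

section Ring

variable [Ring R] {α : G →* RingAut R} {ι : R →+* S}

theorem eq_zero_of_sum_eq_zero (hS : IsSkewGroupRing R G α S ι σ) {c : G →₀ R}
    (hc : (c.sum fun g r => ι r * σ g) = 0) : c = 0 := by
  obtain ⟨_, -, huniq⟩ := hS.repr_existsUnique 0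
  exact (huniq c hc.symm).trans (huniq 0 (by simp)).symm

theorem injective (hS : IsSkewGroupRing R G α S ι σ) : Function.Injective ι := by
  refine (injective_iff_map_eq_zero ι).2 fun r hr => ?_
  simpa using hS.eq_zero_of_sum_eq_zero (c := single 1 r) (by simp [hr])

theorem nontrivial [Nontrivial R] (hS : IsSkewGroupRing R G α S ι σ) : Nontrivial S :=
  hS.injective.nontrivial

theorem map_action_eq_conj (hS : IsSkewGroupRing R G α S ι σ) (g : G) (r : R) :
    ι (α g r) = σ g * ι r * σ g⁻¹ := by
  rw [hS.commutes, mul_assoc, ← map_mul, mul_inv_cancel, map_one, mul_one]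

theorem mul_sum_sub_sum_mul (hS : IsSkewGroupRing R G α S ι σ) (c : G →₀ R) (s t : R) :
    ι s * (c.sum fun g r => ι r * σ g) - (c.sum fun g r => ι r * σ g) * ι t =
      c.sum fun g r => ι (s * r - r * α g t) * σ g := by
  simp only [Finsupp.sum, Finset.mul_sum, Finset.sum_mul, ← Finset.sum_sub_distrib]
  refine Finset.sum_congr rfl fun g _ => ?_
  rw [map_sub, map_mul, map_mul, sub_mul, mul_assoc, mul_assoc, mul_assoc, hS.commutes]

theorem exists_support_minimal (hS : IsSkewGroupRing R G α S ι σ) {I : TwoSidedIdeal S}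
    (hI : I ≠ ⊥) :
    ∃ c : G →₀ R, c ≠ 0 ∧ (c.sum fun g r => ι r * σ g) ∈ I ∧
      ∀ d : G →₀ R, (d.sum fun g r => ι r * σ g) ∈ I → d.support ⊂ c.support → d = 0 := by
  obtain ⟨s, hsI, hs0⟩ := TwoSidedIdeal.exists_mem_ne_zero_of_ne_bot hI
  obtain ⟨c₀, hc₀, -⟩ := hS.repr_existsUnique s
  obtain ⟨c, ⟨hc0, hcI⟩, hmin⟩ := (measure fun c : G →₀ R => c.support.card).wf.has_min
    {c | c ≠ 0 ∧ (c.sum fun g r => ι r * σ g) ∈ I}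
    ⟨c₀, fun h => hs0 (by simp [hc₀, h]), hc₀ ▸ hsI⟩
  refine ⟨c, hc0, hcI, fun d hdI hdc => ?_⟩
  by_contra hd0
  exact hmin d ⟨hd0, hdI⟩ (Finset.card_lt_card hdc)

end Ring

section CommRing

variable [CommRing R] {α : G →* RingAut R} {ι : R →+* S}

/-- For commutative `R`: no `ι r * σ g` with `r ≠ 0`, `g ≠ 1` commutes with `ι R`, i.e. `R` is a
maximal commutative subring of `R *_α G`. -/
def _root_.IsSelfCentralizing (α : G →* RingAut R) : Prop :=
  ∀ g ≠ (1 : G), ∀ r ≠ (0 : R), ∃ t, r * t ≠ r * α g t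

theorem eq_single_of_support_minimal (hS : IsSkewGroupRing R G α S ι σ)
    (hcent : IsSelfCentralizing α)
    {I : TwoSidedIdeal S} {c : G →₀ R} (hcI : (c.sum fun g r => ι r * σ g) ∈ I)
    (hmin : ∀ d : G →₀ R, (d.sum fun g r => ι r * σ g) ∈ I → d.support ⊂ c.support → d = 0)
    {g₀ : G} (hg₀ : g₀ ∈ c.support) : c = single g₀ (c g₀) := by
  have hmul : ∀ g h r, α g (α h r) = α (g * h) r := fun g h r => by rw [map_mul]; rfl
  have hcomm : ∀ t g, c g * t = c g * α (g * g₀⁻¹) t := by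
    intro t
    let d := onFinset c.support (fun g => t * c g - c g * α g (α g₀⁻¹ t)) fun g hg => by
      contrapose! hg
      simp [notMem_support_iff.1 hg]
    have hdI : (d.sum fun g r => ι r * σ g) ∈ I := by
      have : (d.sum fun g r => ι r * σ g) =
          ι t * (c.sum fun g r => ι r * σ g) - (c.sum fun g r => ι r * σ g) * ι (α g₀⁻¹ t) := by
        rw [hS.mul_sum_sub_sum_mul]
        exact onFinset_sum _ fun _ => by simp
      rw [this]
      exact I.sub_mem (I.mul_mem_left _ _ hcI) (I.mul_mem_right _ _ hcI)
    have hdc : d.support ⊂ c.support := by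
      refine Finset.ssubset_iff_of_subset support_onFinset_subset |>.2 ⟨g₀, hg₀, ?_⟩
      simp [mul_comm]
    intro g
    have := DFunLike.congr_fun (hmin d hdI hdc) g
    simpa [d, hmul, sub_eq_zero, mul_comm] using this
  refine support_subset_singleton.1 fun g hg => Finset.mem_singleton.2 ?_
  by_contra hne
  obtain ⟨t, ht⟩ := hcent (g * g₀⁻¹) (mul_inv_eq_one.not.2 hne) (c g) (mem_support_iff.1 hg)
  exact ht (hcomm t g)

theorem exists_ne_zero_map_mem (hS : IsSkewGroupRing R G α S ι σ)
    (hcent : IsSelfCentralizing α)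
    {I : TwoSidedIdeal S} (hI : I ≠ ⊥) : ∃ r ≠ 0, ι r ∈ I := by
  obtain ⟨c, hc0, hcI, hmin⟩ := hS.exists_support_minimal hI
  obtain ⟨g₀, hg₀⟩ := support_nonempty_iff.2 hc0
  refine ⟨c g₀, mem_support_iff.1 hg₀, ?_⟩
  rw [hS.eq_single_of_support_minimal hcent hcI hmin hg₀, sum_single_index (by simp)] at hcI
  simpa [mul_assoc, ← map_mul] using I.mul_mem_right _ (σ g₀⁻¹) hcI

theorem isSimpleRing_s16 (hS : IsSkewGroupRing R G α S ι σ) (hR : IsGSimple R α)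
    (hcent : IsSelfCentralizing α) : IsSimpleRing S := by
  have := hR.1
  have := hS.nontrivial
  refine .of_eq_bot_or_eq_top fun I => or_iff_not_imp_left.2 fun hI => ?_
  obtain ⟨r, hr0, hrI⟩ := hS.exists_ne_zero_map_mem hcent hI
  have hinv : ∀ (g : G), ∀ r ∈ TwoSidedIdeal.comap ι I, α g r ∈ TwoSidedIdeal.comap ι I :=
    fun g r hr => by
      rw [TwoSidedIdeal.mem_comap, hS.map_action_eq_conj] at *
      exact I.mul_mem_right _ _ (I.mul_mem_left _ _ hr)
  have hJ : TwoSidedIdeal.comap ι I = ⊤ := (hR.2 _ hinv).resolve_left fun h => hr0 <| by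
    simpa [h] using (TwoSidedIdeal.mem_comap ι).2 hrI
  have h1 : (1 : R) ∈ TwoSidedIdeal.comap ι I := hJ ▸ TwoSidedIdeal.mem_top R
  rw [TwoSidedIdeal.mem_comap, map_one] at h1
  exact I.eq_top h1

end CommRing

end IsSkewGroupRing

namespace LocallyConstant

variable {X : Type*} [TopologicalSpace X]

instance {Y : Type*} [Nonempty X] [Nontrivial Y] : Nontrivial (LocallyConstant X Y) :=
  Function.Injective.nontrivial (f := const X) fun _ _ h => congr($h (Classical.arbitrary X))

open Classical in
theorem charFn_apply {Y : Type*} [MulZeroOneClass Y] {U : Set X} (hU : IsClopen U) (x : X) :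
    charFn Y hU x = if x ∈ U then 1 else 0 := by
  simp [coe_charFn, Set.indicator_apply]

variable {k : Type*} [Field k]

theorem mul_inv_cancel_of_forall_ne_zero {f : LocallyConstant X k} (hf : ∀ x, f x ≠ 0) :
    f * f⁻¹ = 1 :=
  ext fun x => mul_inv_cancel₀ (hf x)

theorem exists_charFn_mem {I : TwoSidedIdeal (LocallyConstant X k)} (hI : I ≠ ⊥) :
    ∃ (U : Set X) (hU : IsClopen U), U.Nonempty ∧ charFn k hU ∈ I := by
  obtain ⟨r, hrI, hr0⟩ := TwoSidedIdeal.exists_mem_ne_zero_of_ne_bot hI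
  obtain ⟨x₀, hx₀⟩ : ∃ x, r x ≠ 0 := by
    by_contra! h
    exact hr0 (ext h)
  have hU := r.isLocallyConstant.isClopen_fiber (r x₀)
  refine ⟨_, hU, ⟨x₀, rfl⟩, ?_⟩
  have : const X (r x₀)⁻¹ * charFn k hU * r = charFn k hU := by
    ext x
    by_cases hx : r x = r x₀ <;> simp [charFn_apply, hx, hx₀]
  exact this ▸ I.mul_mem_left _ _ hrI

variable {G : Type*} [Group G] [MulAction G X] {α : G →* RingAut (LocallyConstant X k)}

theorem isGSimple [CompactSpace X] [Nonempty X] [ContinuousConstSMul G X]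
    [MulAction.IsMinimal G X] [CharZero k] (hα : ∀ g t x, α g t x = t (g⁻¹ • x)) :
    IsGSimple (LocallyConstant X k) α := by
  refine ⟨inferInstance, fun I hinv => or_iff_not_imp_left.2 fun hI => ?_⟩
  obtain ⟨U, hU, hne, hUI⟩ := exists_charFn_mem hI
  obtain ⟨F, hF⟩ := isCompact_univ.exists_finite_cover_smul G hU.isOpen hne
  set f := ∑ g ∈ F, α g (charFn k hU)
  have hfI : f ∈ I := sum_mem fun g _ => hinv g _ hUI
  have hf : ∀ x, f x ≠ 0 := by
    intro x
    obtain ⟨g, hgF, hgx⟩ : ∃ g ∈ F, g⁻¹ • x ∈ U := by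
      simpa [Set.mem_smul_set_iff_inv_smul_mem] using hF (Set.mem_univ x)
    rw [← evalRingHom_apply, map_sum]
    simp only [evalRingHom_apply, hα, charFn_apply, Finset.sum_boole, Nat.cast_ne_zero,
      Finset.card_ne_zero]
    exact ⟨g, by simpa using ⟨hgF, hgx⟩⟩
  exact I.eq_top (mul_inv_cancel_of_forall_ne_zero hf ▸ I.mul_mem_right _ _ hfI)

theorem isSelfCentralizing [TotallySeparatedSpace X]
    (hfree : ∀ (g : G) (x : X), g • x = x → g = 1) (hα : ∀ g t x, α g t x = t (g⁻¹ • x)) :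
    IsSelfCentralizing α := by
  intro g hg r hr
  obtain ⟨x, hx⟩ : ∃ x, r x ≠ 0 := by
    by_contra! h
    exact hr (ext h)
  have hgx : x ≠ g⁻¹ • x := fun h => hg (inv_eq_one.1 (hfree g⁻¹ x h.symm))
  obtain ⟨V, hV, hxV, hgxV⟩ := exists_isClopen_of_totally_separated hgx
  refine ⟨charFn k hV, fun h => hx ?_⟩
  simpa [hα, charFn_apply, hxV, Set.notMem_of_mem_compl hgxV] using congr($h x)

end LocallyConstant

theorem Subgroup.isMinimal_of_dense {X : Type*} [TopologicalSpace X] [Group X] [ContinuousMul X]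
    {G : Subgroup X} (hG : Dense (G : Set X)) : MulAction.IsMinimal G X where
  dense_orbit x := (mul_right_surjective x).denseRange.comp hG.denseRange_val
    (continuous_mul_const x)

/-- Suppose `X` is a compact Hausdorff totally disconnected topological group and `G` a
dense subgroup of `X`, acting on `X` by left multiplication. Let `k` be a field of
characteristic `0`, `T` the ring of locally constant functions `X → k`, and `α` the
induced action of `G` on `T`, `(α g t) x = t (g⁻¹ x)` (formalized as any homomorphism
`α : G →* RingAut T` satisfying this formula). Then the skew group ring `T*_α G` is a
simple ring. -/
theorem skewGroupRing_locallyConstant_denseSubgroup_isSimpleRing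
    {X : Type*} [TopologicalSpace X] [Group X] [IsTopologicalGroup X]
    [CompactSpace X] [T2Space X] [TotallyDisconnectedSpace X]
    {k : Type*} [Field k] [CharZero k]
    (G : Subgroup X) (hG : Dense (G : Set X))
    (α : G →* RingAut (LocallyConstant X k))
    (hα : ∀ (g : G) (t : LocallyConstant X k) (x : X), α g t x = t ((g : X)⁻¹ * x))
    {S : Type*} [Ring S] (ι : LocallyConstant X k →+* S) (σ : G →* S)
    (hS : IsSkewGroupRing (LocallyConstant X k) G α S ι σ) :
    IsSimpleRing S := by
  have := Subgroup.isMinimal_of_dense hG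
  have hfree (g : G) (x : X) (h : g • x = x) : g = 1 := Subtype.ext (mul_eq_right.1 h)
  exact hS.isSimpleRing_s16 (LocallyConstant.isGSimple hα)
    (LocallyConstant.isSelfCentralizing hfree hα)
end
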